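/- arXiv:1812.09871 — 5 statements merged into one kernel-verified Lean document; each statement's English description precedes it below -/
import Mathlib

section
/- Let n ≥ 1, let T : ℝⁿ → ℝⁿ be monotone and additively homogeneous, and suppose T(u) = λ·e + u for some λ ∈ ℝ and u ∈ ℝⁿ. Let I, J ⊆ {1,…,n} be nonempty disjoint sets and ε > 0 be such that T_i(u + ε·e_{Iᶜ}) = λ + u_i for all i ∈ I and T_j(u − ε·e_{Jᶜ}) = λ + u_j for all j ∈ J. Then there exists v ∈ ℝⁿ with T(v) = λ·e + v, u ≤ v ≤ u + ε·e, v_i = u_i for all i ∈ I, and v_j = u_j + ε for all j ∈ J; in particular v − u is not a scalar multiple of e. -/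
/-!
By additive homogeneity and the two hypotheses on `I` and `J`, `u + ε·e_J` is a sub-eigenvector
(`λ·e + x ≤ T x`) and `u + ε·e_{Iᶜ}` a super-eigenvector (`T x ≤ λ·e + x`), and the first lies
below the second because `I` and `J` are disjoint. The monotone map `x ↦ T x - λ·e` therefore
maps the order interval between them into itself, and since that interval is a complete lattice,
Knaster–Tarski yields the eigenvector `v` inside it; its bounds pin `v` down on `I` and on `J`.
-/

/-- `T` is additively homogeneous: `T(x + c·e) = T(x) + c·e`. -/
def AddHomog (n : ℕ) (T : (Fin n → ℝ) → (Fin n → ℝ)) : Prop :=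
  ∀ (x : Fin n → ℝ) (c : ℝ), T (fun i => x i + c) = fun i => T x i + c

/-- `Δ` is a local MIN-dominion for `T` at `u`: there is `ε > 0` with
`T_i(u + t·e_{Δᶜ}) = T_i(u)` for all `i ∈ Δ` and all `t ∈ [0, ε]`. -/
def LocalMinDominion (n : ℕ) (T : (Fin n → ℝ) → (Fin n → ℝ)) (u : Fin n → ℝ)
    (Δ : Set (Fin n)) : Prop :=
  Δ.Nonempty ∧ ∃ ε : ℝ, 0 < ε ∧ ∀ i ∈ Δ, ∀ t : ℝ, 0 ≤ t → t ≤ ε →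
    T (fun j => u j + Δᶜ.indicator (fun _ => t) j) i = T u i

/-- `Δ` is a local MAX-dominion for `T` at `u`: there is `ε > 0` with
`T_i(u − t·e_{Δᶜ}) = T_i(u)` for all `i ∈ Δ` and all `t ∈ [0, ε]`. -/
def LocalMaxDominion (n : ℕ) (T : (Fin n → ℝ) → (Fin n → ℝ)) (u : Fin n → ℝ)
    (Δ : Set (Fin n)) : Prop :=
  Δ.Nonempty ∧ ∃ ε : ℝ, 0 < ε ∧ ∀ i ∈ Δ, ∀ t : ℝ, 0 ≤ t → t ≤ ε →
    T (fun j => u j - Δᶜ.indicator (fun _ => t) j) i = T u i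

theorem Monotone.exists_fixedPoint_mem_Icc {α : Type*} [ConditionallyCompleteLattice α]
    {f : α → α} (hf : Monotone f) {a b : α} (hab : a ≤ b) (ha : a ≤ f a) (hb : f b ≤ b) :
    ∃ x ∈ Set.Icc a b, f x = x := by
  have : Fact (a ≤ b) := ⟨hab⟩
  let g : Set.Icc a b →o Set.Icc a b :=
    ⟨fun x => ⟨f x, ha.trans (hf x.2.1), (hf x.2.2).trans hb⟩, fun _ _ h => hf h⟩
  exact ⟨g.lfp, g.lfp.2, congrArg Subtype.val g.map_lfp⟩

theorem Monotone.exists_eigenvector_mem_Icc {ι : Type*} {T : (ι → ℝ) → (ι → ℝ)}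
    (hmono : Monotone T) {lam : ℝ} {a b : ι → ℝ} (hab : a ≤ b)
    (ha : (fun i => lam + a i) ≤ T a) (hb : T b ≤ fun i => lam + b i) :
    ∃ v ∈ Set.Icc a b, T v = fun i => lam + v i := by
  have hf : Monotone fun x i => T x i - lam := fun x y h i => by
    simpa using hmono h i
  obtain ⟨v, hv, hfix⟩ := hf.exists_fixedPoint_mem_Icc hab
    (fun i => le_sub_iff_add_le'.mpr (ha i)) (fun i => sub_le_iff_le_add'.mpr (hb i))
  exact ⟨v, hv, funext fun i => eq_add_of_sub_eq' (congrFun hfix i)⟩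

namespace AddHomog

variable {n : ℕ} {T : (Fin n → ℝ) → (Fin n → ℝ)} {lam c : ℝ} {u : Fin n → ℝ}

theorem apply_add_indicator_compl_le (hhom : AddHomog n T) (hmono : Monotone T)
    (hu : T u = fun i => lam + u i) (hc : 0 ≤ c) {I : Set (Fin n)}
    (hmin : ∀ i ∈ I, T (fun j => u j + Iᶜ.indicator (fun _ => c) j) i = lam + u i) :
    T (fun j => u j + Iᶜ.indicator (fun _ => c) j) ≤
      fun i => lam + (u i + Iᶜ.indicator (fun _ => c) i) := by
  intro i
  by_cases hi : i ∈ I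
  · simp [hi, hmin i hi]
  · have hle : (fun j => u j + Iᶜ.indicator (fun _ => c) j) ≤ fun j => u j + c := fun j => by
      by_cases hj : j ∈ I <;> simp [hj, hc]
    have := hmono hle i
    rw [hhom, hu] at this
    simp only [Set.indicator_of_mem (Set.mem_compl hi)]
    linarith

theorem le_apply_sub_indicator_compl (hhom : AddHomog n T) (hmono : Monotone T)
    (hu : T u = fun i => lam + u i) (hc : 0 ≤ c) {J : Set (Fin n)}
    (hmax : ∀ j ∈ J, T (fun l => u l - Jᶜ.indicator (fun _ => c) l) j = lam + u j) :
    (fun i => lam + (u i - Jᶜ.indicator (fun _ => c) i)) ≤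
      T (fun l => u l - Jᶜ.indicator (fun _ => c) l) := by
  intro j
  by_cases hj : j ∈ J
  · simp [hj, hmax j hj]
  · have hle : (fun l => u l + -c) ≤ fun l => u l - Jᶜ.indicator (fun _ => c) l := fun l => by
      by_cases hl : l ∈ J <;> simp [hl, hc, sub_eq_add_neg]
    have := hmono hle j
    rw [hhom, hu] at this
    simp only [Set.indicator_of_mem (Set.mem_compl hj)]
    linarith

end AddHomog

theorem stmt13_general (n : ℕ)
    (T : (Fin n → ℝ) → (Fin n → ℝ))
    (hmono : Monotone T) (hhom : AddHomog n T)
    (lam : ℝ) (u : Fin n → ℝ) (hu : T u = fun i => lam + u i)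
    (I J : Set (Fin n)) (hI : I.Nonempty) (hJ : J.Nonempty) (hIJ : Disjoint I J)
    (ε : ℝ) (hε : 0 < ε)
    (hmin : ∀ i ∈ I, T (fun j => u j + Iᶜ.indicator (fun _ => ε) j) i = lam + u i)
    (hmax : ∀ j ∈ J, T (fun l => u l - Jᶜ.indicator (fun _ => ε) l) j = lam + u j) :
    ∃ v : Fin n → ℝ, T v = (fun i => lam + v i) ∧
      u ≤ v ∧ v ≤ (fun i => u i + ε) ∧
      (∀ i ∈ I, v i = u i) ∧ (∀ j ∈ J, v j = u j + ε) ∧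
      ¬ ∃ c : ℝ, v - u = fun _ => c := by
  set lower : Fin n → ℝ := fun l => u l - Jᶜ.indicator (fun _ => ε) l + ε
  set upper : Fin n → ℝ := fun j => u j + Iᶜ.indicator (fun _ => ε) j
  have hlower : (fun i => lam + lower i) ≤ T lower := fun i => by
    have := hhom.le_apply_sub_indicator_compl hmono hu hε.le hmax i
    simp only [lower, hhom _ ε]
    linarith
  have hupper := hhom.apply_add_indicator_compl_le hmono hu hε.le hmin
  have hle : lower ≤ upper := fun l => by
    by_cases hlI : l ∈ I
    · simp [lower, upper, hlI, Set.disjoint_left.mp hIJ hlI]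
    · by_cases hlJ : l ∈ J <;> simp [lower, upper, hlI, hlJ, hε.le]
  obtain ⟨v, ⟨hlv, hvu⟩, hv⟩ := hmono.exists_eigenvector_mem_Icc hle hlower hupper
  have hu_lower : u ≤ lower := fun l => by by_cases hl : l ∈ J <;> simp [lower, hl, hε.le]
  have hupper_u : upper ≤ fun l => u l + ε := fun l => by
    by_cases hl : l ∈ I <;> simp [upper, hl, hε.le]
  have hvI : ∀ i ∈ I, v i = u i := fun i hi =>
    le_antisymm (by simpa [upper, hi] using hvu i) ((hu_lower i).trans (hlv i))
  have hvJ : ∀ j ∈ J, v j = u j + ε := fun j hj =>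
    le_antisymm ((hvu j).trans (hupper_u j)) (by simpa [lower, hj] using hlv j)
  refine ⟨v, hv, hu_lower.trans hlv, hvu.trans hupper_u, hvI, hvJ, ?_⟩
  rintro ⟨c, hc⟩
  obtain ⟨i, hi⟩ := hI
  obtain ⟨j, hj⟩ := hJ
  have hci := congrFun hc i
  have hcj := congrFun hc j
  simp only [Pi.sub_apply, hvI i hi, hvJ j hj] at hci hcj
  linarith

theorem stmt13 (n : ℕ) (hn : 1 ≤ n)
    (T : (Fin n → ℝ) → (Fin n → ℝ))
    (hmono : Monotone T) (hhom : AddHomog n T)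
    (lam : ℝ) (u : Fin n → ℝ) (hu : T u = fun i => lam + u i)
    (I J : Set (Fin n)) (hI : I.Nonempty) (hJ : J.Nonempty) (hIJ : Disjoint I J)
    (ε : ℝ) (hε : 0 < ε)
    (hmin : ∀ i ∈ I, T (fun j => u j + Iᶜ.indicator (fun _ => ε) j) i = lam + u i)
    (hmax : ∀ j ∈ J, T (fun l => u l - Jᶜ.indicator (fun _ => ε) l) j = lam + u j) :
    ∃ v : Fin n → ℝ, T v = (fun i => lam + v i) ∧
      u ≤ v ∧ v ≤ (fun i => u i + ε) ∧
      (∀ i ∈ I, v i = u i) ∧ (∀ j ∈ J, v j = u j + ε) ∧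
      ¬ ∃ c : ℝ, v - u = fun _ => c :=
  stmt13_general n T hmono hhom lam u hu I J hI hJ hIJ ε hε hmin hmax
end

section
/- Let n ≥ 1 and let T : ℝⁿ → ℝⁿ be monotone, additively homogeneous, and convex. Then for every i ∈ {1,…,n} and every I ⊆ {1,…,n}, the set {T_i(t·e_{Iᶜ}) : t ≥ 0} is bounded above if and only if supp(T_i) ⊆ I. -/
/-- The support of `g : ℝⁿ → ℝ`: indices `i` on which `g` effectively depends. -/
def Supp (n : ℕ) (g : (Fin n → ℝ) → ℝ) : Set (Fin n) :=
  {i | ∃ x y : Fin n → ℝ, (∀ j, j ≠ i → x j = y j) ∧ g x ≠ g y}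

/-- Changing coordinates outside the support does not change the value. -/
lemma supp_const (n : ℕ) (g : (Fin n → ℝ) → ℝ) :
    ∀ (s : Finset (Fin n)) (x y : Fin n → ℝ),
      (∀ j ∈ s, j ∉ Supp n g) → (∀ j, j ∉ s → x j = y j) → g x = g y := by
  intro s
  induction s using Finset.induction with
  | empty =>
    intro x y _ h
    congr 1
    exact funext fun j => h j (by simp)
  | @insert a s ha ih =>
    intro x y hs h
    have ha' : a ∉ Supp n g := hs a (Finset.mem_insert_self a s)
    have h1 : g x = g (Function.update x a (y a)) := by
      by_contra hne
      exact ha' ⟨x, Function.update x a (y a),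
        fun j hj => (Function.update_of_ne hj _ _).symm, hne⟩
    rw [h1]
    apply ih _ _ (fun j hj => hs j (Finset.mem_insert_of_mem hj))
    intro j hj
    by_cases hja : j = a
    · subst hja; simp
    · rw [Function.update_of_ne hja]
      exact h j (by simp [hja, hj])

theorem stmt14 (n : ℕ) (hn : 1 ≤ n)
    (T : (Fin n → ℝ) → (Fin n → ℝ))
    (hmono : Monotone T) (hhom : AddHomog n T)
    (hconv : ∀ i, ConvexOn ℝ Set.univ (fun x => T x i)) :
    ∀ (i : Fin n) (I : Set (Fin n)),
      (∃ C : ℝ, ∀ t : ℝ, 0 ≤ t → T (Iᶜ.indicator fun _ => t) i ≤ C) ↔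
      Supp n (fun x => T x i) ⊆ I := by
  classical
  intro i I
  constructor
  · rintro ⟨C, hC⟩ j hj
    by_contra hjI
    obtain ⟨x, y, hagree, hne⟩ := hj
    simp only at hne
    -- the one-dimensional section
    set φ : ℝ → ℝ := fun t => T (Function.update x j t) i with hφdef
    have hφx : φ (x j) = T x i := by simp [hφdef]
    have hyeq : Function.update x j (y j) = y := by
      funext k
      by_cases hk : k = j
      · subst hk; simp
      · rw [Function.update_of_ne hk]; exact hagree k hk
    have hφy : φ (y j) = T y i := by rw [hφdef]; simp only; rw [hyeq]
    have hφmono : Monotone φ := by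
      intro s t hst
      apply hmono
      intro k
      by_cases hk : k = j
      · subst hk; simp [hst]
      · simp [Function.update_of_ne hk]
    have hφconv : ConvexOn ℝ Set.univ φ := by
      refine ⟨convex_univ, ?_⟩
      intro u _ v _ a b ha hb hab
      have key : Function.update x j (a • u + b • v)
          = a • Function.update x j u + b • Function.update x j v := by
        funext k
        by_cases hk : k = j
        · subst hk; simp
        · simp only [Function.update_of_ne hk, Pi.add_apply, Pi.smul_apply,
            smul_eq_mul]
          rw [← add_mul, hab, one_mul]
      have e : φ (a • u + b • v)
          = T (a • Function.update x j u + b • Function.update x j v) i := by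
        simp only [hφdef]
        rw [key]
      rw [e]
      simpa using (hconv i).2 (Set.mem_univ (Function.update x j u))
        (Set.mem_univ (Function.update x j v)) ha hb hab
    -- two points with strictly increasing values
    have hxyj : x j ≠ y j := by
      intro h
      apply hne
      congr 1
      funext k
      by_cases hk : k = j
      · subst hk; exact h
      · exact hagree k hk
    obtain ⟨u, v, huv, hφuv⟩ : ∃ u v : ℝ, u < v ∧ φ u < φ v := by
      rcases lt_or_gt_of_ne hxyj with h | h
      · exact ⟨x j, y j, h, lt_of_le_of_ne (hφmono h.le)
          (by rw [hφx, hφy]; exact hne)⟩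
      · exact ⟨y j, x j, h, lt_of_le_of_ne (hφmono h.le)
          (by rw [hφx, hφy]; exact fun h' => hne h'.symm)⟩
    -- an upper bound for coordinates of x
    set M : ℝ := ∑ k, |x k| with hMdef
    have hM0 : 0 ≤ M := Finset.sum_nonneg fun _ _ => abs_nonneg _
    have hMk : ∀ k, x k ≤ M := fun k =>
      (le_abs_self _).trans
        (Finset.single_le_sum (f := fun k => |x k|) (fun _ _ => abs_nonneg _) (Finset.mem_univ k))
    have hjIc : j ∈ Iᶜ := hjI
    -- φ is bounded above on t ≥ 0
    have hbound : ∀ t : ℝ, 0 ≤ t → φ t ≤ C + M := by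
      intro t ht
      have hle : Function.update x j t ≤ fun k => Iᶜ.indicator (fun _ => t) k + M := by
        intro k
        by_cases hk : k = j
        · subst hk
          show Function.update x k t k ≤ Iᶜ.indicator (fun _ => t) k + M
          rw [Set.indicator_of_mem hjIc]
          simp only [Function.update_self]
          linarith
        · rw [Function.update_of_ne hk]
          show x k ≤ Iᶜ.indicator (fun _ => t) k + M
          have h0 : (0:ℝ) ≤ Iᶜ.indicator (fun _ => t) k :=
            Set.indicator_nonneg (fun _ _ => ht) k
          linarith [hMk k]
      have h1 := hmono hle i
      have h2 : T (fun k => Iᶜ.indicator (fun _ => t) k + M)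
          = fun k => T (Iᶜ.indicator fun _ => t) k + M := hhom _ M
      rw [h2] at h1
      have h1' : T (Function.update x j t) i ≤ T (Iᶜ.indicator fun _ => t) i + M := h1
      have := hC t ht
      simp only [hφdef]
      linarith
    -- but convexity forces φ to be unbounded
    set σ : ℝ := (φ v - φ u) / (v - u) with hσdef
    have hσ : 0 < σ := div_pos (by linarith) (by linarith)
    set t : ℝ := max 0 (max (v + 1) (v + (C + M + 1 - φ v) / σ)) with htdef
    have ht0 : 0 ≤ t := le_max_left _ _
    have htv : v + 1 ≤ t := le_trans (le_max_left _ _) (le_max_right _ _)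
    have htv2 : v + (C + M + 1 - φ v) / σ ≤ t :=
      le_trans (le_max_right _ _) (le_max_right _ _)
    have hslope := hφconv.slope_mono_adjacent (Set.mem_univ u) (Set.mem_univ t)
      huv (by linarith)
    rw [← hσdef] at hslope
    have htvpos : 0 < t - v := by linarith
    have h3 : σ * (t - v) ≤ φ t - φ v := (le_div_iff₀ htvpos).mp hslope
    have h4 : (C + M + 1 - φ v) / σ ≤ t - v := by linarith
    have h5 : σ * ((C + M + 1 - φ v) / σ) ≤ σ * (t - v) :=
      mul_le_mul_of_nonneg_left h4 hσ.le
    have h6 : σ * ((C + M + 1 - φ v) / σ) = C + M + 1 - φ v := by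
      rw [mul_comm]; exact div_mul_cancel₀ _ hσ.ne'
    have := hbound t ht0
    linarith
  · intro hsupp
    refine ⟨T (fun _ => 0) i, fun t ht => ?_⟩
    have := supp_const n (fun x => T x i)
      (Finset.univ.filter (fun j => j ∈ Iᶜ))
      (Iᶜ.indicator fun _ => t) (fun _ => 0)
      (fun j hj => by
        intro hjs
        exact (Finset.mem_filter.mp hj).2 (hsupp hjs))
      (fun j hj => by
        have : j ∉ Iᶜ := fun h => hj (Finset.mem_filter.mpr ⟨Finset.mem_univ j, h⟩)
        simp [Set.indicator_of_notMem this])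
    rw [this]
end

section
/- Let n ≥ 1 and let T : ℝⁿ → ℝⁿ be monotone, additively homogeneous, and convex. Then there exist real numbers α ≤ β such that the additive slice space A_α^β(T) = {x ∈ ℝⁿ : α·e + x ≤ T(x) ≤ β·e + x} is unbounded in Hilbert's seminorm if and only if there exist disjoint nonempty sets Θ, Δ ⊆ {1,…,n} such that supp(T_i) ⊆ Θ for all i ∈ Θ, and Δ is a MAX-dominion for T. -/
/-- `Δ` is a MAX-dominion for `T`. -/
def MaxDominion (n : ℕ) (T : (Fin n → ℝ) → (Fin n → ℝ)) (Δ : Set (Fin n)) : Prop :=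
  Δ.Nonempty ∧ ∃ α : ℝ, ∀ i ∈ Δ, ∀ t : ℝ, 0 ≤ t →
    α ≤ T (Δᶜ.indicator fun _ => -t) i

/-- Hilbert's seminorm. -/
noncomputable def hilbertSeminorm (n : ℕ) (x : Fin n → ℝ) : ℝ :=
  (⨆ i, x i) - ⨅ i, x i

/-- The additive slice space `A_α^β(T)`. -/
def addSliceSpace (n : ℕ) (T : (Fin n → ℝ) → (Fin n → ℝ)) (α β : ℝ) : Set (Fin n → ℝ) :=
  {x | ∀ i, α + x i ≤ T x i ∧ T x i ≤ β + x i}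

/-!
Forward direction: shift the points of an unbounded slice space so that their maximum is `0`;
their spreads `m k` tend to infinity, and along a subsequence `u k / m k → Y` and
`exp ∘ u k → E`. Coordinates with `E i > 0` stay bounded below while the others tend to `-∞`, so
by monotonicity `Δ = {E > 0}` is a MAX-dominion. Convexity of `T i` on the segment from `0` to
`u k` gives `T (s • Y) i ≤ T 0 i + s * Y i`; for `i ∈ Θ = {Y = -1}` this bounds `T i` from above
along every ray `c • e_j` with `Y j > -1` (compare `c • e_j` with `s • Y + s`), and a convex
function bounded above along a ray is constant along it, so `T i` only depends on `Θ`.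

Converse: for `t ≥ 0` the least `w ≥ -t • e_{Δᶜ}` with `T w ≤ β + w` lies in the slice space;
it vanishes on `Δ`, and it is `-t` on `Θ` since, `Θ` being invariant, `-t • e_Θ` is another
such subsolution.
-/

open Filter Topology Set

theorem ConvexOn.apply_add_smul_le_of_forall_le {E : Type*} [AddCommGroup E] [Module ℝ E]
    {f : E → ℝ} (hf : ConvexOn ℝ univ f) {x v : E} {B : ℝ}
    (hB : ∀ t : ℝ, 0 ≤ t → f (x + t • v) ≤ B) {c : ℝ} (hc : 0 ≤ c) :
    f (x + c • v) ≤ f x := by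
  have key : ∀ t : ℝ, c < t → f (x + c • v) ≤ f x + c / t * (B - f x) := by
    intro t hct
    have ht : 0 < t := hc.trans_lt hct
    have hcomb : (c / t) • (x + t • v) + (1 - c / t) • x = x + c • v := by
      rw [smul_add, smul_smul, div_mul_cancel₀ c ht.ne', sub_smul, one_smul]
      abel
    have hconv := hf.2 (mem_univ (x + t • v)) (mem_univ x) (div_nonneg hc ht.le)
      (sub_nonneg.2 ((div_le_one ht).2 hct.le)) (add_sub_cancel _ _)
    rw [hcomb, smul_eq_mul, smul_eq_mul] at hconv
    nlinarith [mul_le_mul_of_nonneg_left (hB t ht.le) (div_nonneg hc ht.le)]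
  have hlim : Tendsto (fun t => f x + c / t * (B - f x)) atTop (𝓝 (f x)) := by
    simpa using tendsto_const_nhds.add
      ((tendsto_const_nhds.div_atTop tendsto_id).mul_const (B - f x))
  exact ge_of_tendsto hlim ((eventually_gt_atTop c).mono key)

theorem exists_apply_eq_of_tendsto {α ι X : Type*} [Finite ι] [TopologicalSpace X] [T2Space X]
    {l : Filter α} [l.NeBot] {f : α → ι → X} {L : ι → X} (hf : Tendsto f l (𝓝 L)) {c : X}
    (h : ∀ a, ∃ i, f a i = c) : ∃ i, L i = c := by
  obtain ⟨i, hi⟩ := frequently_exists.1 (Frequently.of_forall (f := l) h)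
  exact ⟨i, tendsto_nhds_unique_of_frequently_eq (tendsto_pi_nhds.1 hf i) tendsto_const_nhds hi⟩

theorem tendsto_atBot_of_tendsto_inv_smul {α ι : Type*} {l : Filter α} {u : α → ι → ℝ}
    {m : α → ℝ} {Y : ι → ℝ} (hm : Tendsto m l atTop)
    (hY : Tendsto (fun a => (m a)⁻¹ • u a) l (𝓝 Y)) {i : ι} (hi : Y i < 0) :
    Tendsto (fun a => u a i) l atBot := by
  refine (hm.atTop_mul_neg hi (tendsto_pi_nhds.1 hY i)).congr' ?_
  filter_upwards [hm.eventually_gt_atTop 0] with a ha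
  simp [ha.ne']

section Subsolution

variable {ι : Type*} {T : (ι → ℝ) → (ι → ℝ)} {β : ℝ} {a : ι → ℝ}

theorem exists_isLeast_subsolution (hmono : Monotone T) {z₀ : ι → ℝ} (ha : a ≤ z₀)
    (hz₀ : ∀ i, T z₀ i ≤ β + z₀ i) :
    ∃ w, IsLeast {z | a ≤ z ∧ ∀ i, T z i ≤ β + z i} w := by
  set S := {z | a ≤ z ∧ ∀ i, T z i ≤ β + z i}
  have hS : S.Nonempty := ⟨z₀, ha, hz₀⟩
  have hbdd : BddBelow S := ⟨a, fun z hz => hz.1⟩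
  have hsub : (fun i => T (sInf S) i - β) ≤ sInf S := le_csInf hS fun z hz i => by
    linarith [hmono (csInf_le hbdd hz) i, hz.2 i]
  exact ⟨sInf S, ⟨le_csInf hS fun z hz => hz.1, fun i => by linarith [hsub i]⟩,
    fun z hz => csInf_le hbdd hz⟩

theorem IsLeast.le_apply_of_lt (hmono : Monotone T) {w : ι → ℝ}
    (hw : IsLeast {z | a ≤ z ∧ ∀ i, T z i ≤ β + z i} w) {i : ι} (hi : a i < w i) :
    β + w i ≤ T w i := by
  classical
  by_contra! h
  set ε := min (w i - a i) (β + w i - T w i)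
  have hε : 0 < ε := lt_min (sub_pos.2 hi) (by linarith)
  set z := Function.update w i (w i - ε)
  have hzw : z ≤ w := fun l => by
    rcases eq_or_ne l i with rfl | hl
    · simp [z, hε.le]
    · simp [z, hl]
  have hz : a ≤ z ∧ ∀ l, T z l ≤ β + z l := by
    refine ⟨fun l => ?_, fun l => ?_⟩
    · rcases eq_or_ne l i with rfl | hl
      · simp only [z, Function.update_self]
        linarith [min_le_left (w l - a l) (β + w l - T w l)]
      · simpa [z, hl] using hw.1.1 l
    · rcases eq_or_ne l i with rfl | hl
      · simp only [z, Function.update_self]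
        linarith [hmono hzw l, min_le_right (w l - a l) (β + w l - T w l)]
      · simpa [z, hl] using (hmono hzw l).trans (hw.1.2 l)
  have := hw.2 hz i
  simp only [z, Function.update_self] at this
  linarith

end Subsolution

section Topical

variable {n : ℕ} {T : (Fin n → ℝ) → (Fin n → ℝ)}

theorem AddHomog.apply_le_apply_add (hhom : AddHomog n T) (hmono : Monotone T)
    {x y : Fin n → ℝ} {c : ℝ} (h : ∀ j, x j ≤ y j + c) (i : Fin n) : T x i ≤ T y i + c := by
  simpa only [hhom y c] using hmono h i

theorem AddHomog.add_mem_addSliceSpace (hhom : AddHomog n T) {α β : ℝ} {x : Fin n → ℝ}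
    (hx : x ∈ addSliceSpace n T α β) (c : ℝ) :
    (fun i => x i + c) ∈ addSliceSpace n T α β := fun i => by
  rw [hhom x c]
  constructor <;> linarith [hx i]

theorem sub_le_hilbertSeminorm (x : Fin n → ℝ) (i j : Fin n) : x i - x j ≤ hilbertSeminorm n x :=
  sub_le_sub (le_ciSup (Finite.bddAbove_range x) i) (ciInf_le (Finite.bddBelow_range x) j)

theorem exists_lt_sub_of_lt_hilbertSeminorm {x : Fin n → ℝ} {M : ℝ} (hM : 0 ≤ M)
    (h : M < hilbertSeminorm n x) : ∃ i j, M < x i - x j := by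
  by_contra! hle
  rcases isEmpty_or_nonempty (Fin n) with hn | hn
  · simp only [hilbertSeminorm, Real.iSup_of_isEmpty, Real.iInf_of_isEmpty, sub_self] at h
    linarith
  have hsup : ⨆ i, x i ≤ M + ⨅ j, x j := ciSup_le fun i => by
    linarith [le_ciInf fun j => (by linarith [hle i j] : x i - M ≤ x j)]
  rw [hilbertSeminorm] at h
  linarith

theorem apply_eq_of_supp_subset {g : (Fin n → ℝ) → ℝ} {S : Set (Fin n)} (hS : Supp n g ⊆ S)
    {x y : Fin n → ℝ} (h : EqOn x y S) : g x = g y := by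
  classical
  suffices key : ∀ s : Finset (Fin n), (∀ j ∈ s, j ∉ S) →
      ∀ x, (∀ j ∉ s, x j = y j) → g x = g y by
    exact key (Sᶜ.toFinite.toFinset) (by simp) x fun j hj => h (by simpa using hj)
  intro s
  induction s using Finset.induction_on with
  | empty => exact fun _ x hx => congrArg g (funext fun j => hx j (Finset.notMem_empty j))
  | insert a s ha ih =>
    intro hs x hx
    have hupd : g x = g (Function.update x a (y a)) := by
      by_contra hne
      exact hs a (Finset.mem_insert_self a s) (hS ⟨x, _,
        fun j hj => (Function.update_of_ne hj _ _).symm, hne⟩)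
    rw [hupd]
    refine ih (fun j hj => hs j (Finset.mem_insert_of_mem hj)) _ fun j hj => ?_
    rcases eq_or_ne j a with rfl | hja
    · simp
    · simpa [hja] using hx j (by simp [hja, hj])

theorem notMem_supp_of_forall_le (hmono : Monotone T) (hhom : AddHomog n T) {i j : Fin n}
    (hconv : ConvexOn ℝ univ fun x => T x i)
    (hray : ∀ c : ℝ, 0 ≤ c → T (Pi.single j c) i ≤ T 0 i) :
    j ∉ Supp n fun x => T x i := by
  have hinv : ∀ x c, 0 ≤ c → T (x + Pi.single j c) i = T x i := by
    intro x c hc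
    refine le_antisymm ?_ (hmono (le_add_of_nonneg_right (Pi.single_nonneg.2 hc)) i)
    have hbound : ∀ t : ℝ, 0 ≤ t → T (x + t • Pi.single j 1) i ≤ T 0 i + ‖x‖ := fun t ht =>
      calc T (x + t • Pi.single j 1) i ≤ T (Pi.single j t) i + ‖x‖ := by
            refine hhom.apply_le_apply_add hmono (fun l => ?_) i
            rw [← Pi.single_smul', smul_eq_mul, mul_one, Pi.add_apply, add_comm]
            exact add_le_add_right ((Real.le_norm_self _).trans (norm_le_pi_norm x l)) _
        _ ≤ T 0 i + ‖x‖ := by linarith [hray t ht]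
    simpa [← Pi.single_smul'] using hconv.apply_add_smul_le_of_forall_le hbound hc
  rintro ⟨x, y, hxy, hne⟩
  wlog h : x j ≤ y j generalizing x y
  · exact this y x (fun l hl => (hxy l hl).symm) hne.symm (le_of_not_ge h)
  have hy : y = x + Pi.single j (y j - x j) := by
    ext l
    rcases eq_or_ne l j with rfl | hl
    · simp
    · simp [hl, hxy l hl]
  exact hne (by rw [hy]; exact (hinv x _ (sub_nonneg.2 h)).symm)

theorem apply_smul_le_of_tendsto {β : ℝ} {i : Fin n} (hconv : ConvexOn ℝ univ fun x => T x i)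
    {u : ℕ → Fin n → ℝ} {m : ℕ → ℝ} {Y : Fin n → ℝ} (hu : ∀ k, T (u k) i ≤ β + u k i)
    (hm : Tendsto m atTop atTop) (hY : Tendsto (fun k => (m k)⁻¹ • u k) atTop (𝓝 Y))
    {s : ℝ} (hs : 0 ≤ s) : T (s • Y) i ≤ T 0 i + s * Y i := by
  have hcont : Continuous fun x => T x i := continuousOn_univ.1 (hconv.continuousOn isOpen_univ)
  have hlhs : Tendsto (fun k => T (s • (m k)⁻¹ • u k) i) atTop (𝓝 (T (s • Y) i)) :=
    (hcont.tendsto _).comp (hY.const_smul s)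
  have hrhs : Tendsto (fun k => T 0 i + s * ((m k)⁻¹ * u k i) + s * (m k)⁻¹ * (β - T 0 i))
      atTop (𝓝 (T 0 i + s * Y i)) := by
    have hYi : Tendsto (fun k => (m k)⁻¹ * u k i) atTop (𝓝 (Y i)) := tendsto_pi_nhds.1 hY i
    simpa using ((hYi.const_mul s).const_add (T 0 i)).add
      ((hm.inv_tendsto_atTop.const_mul s).mul_const (β - T 0 i))
  refine le_of_tendsto_of_tendsto hlhs hrhs ?_
  filter_upwards [hm.eventually_gt_atTop 0, hm.eventually_ge_atTop s] with k hk hks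
  have hr : 0 ≤ s * (m k)⁻¹ := by positivity
  have hr1 : s * (m k)⁻¹ ≤ 1 := by rw [← div_eq_mul_inv]; exact (div_le_one hk).2 hks
  have hconvk := hconv.2 (mem_univ (u k)) (mem_univ 0) hr (sub_nonneg.2 hr1) (add_sub_cancel _ 1)
  rw [smul_zero, add_zero, smul_eq_mul, smul_eq_mul] at hconvk
  rw [smul_smul]
  nlinarith [mul_le_mul_of_nonneg_left (hu k) hr]

theorem supp_subset_of_apply_smul_le (hmono : Monotone T) (hhom : AddHomog n T) {i : Fin n}
    (hconv : ConvexOn ℝ univ fun x => T x i) {Y : Fin n → ℝ} (hY : ∀ l, -1 ≤ Y l)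
    (hray : ∀ s : ℝ, 0 ≤ s → T (s • Y) i ≤ T 0 i - s) :
    Supp n (fun x => T x i) ⊆ {j | Y j = -1} := by
  intro j hj
  by_contra hYj
  have hpos : 0 < 1 + Y j := by
    have : -1 < Y j := (hY j).lt_of_ne (Ne.symm hYj)
    linarith
  refine notMem_supp_of_forall_le hmono hhom hconv (fun c hc => ?_) hj
  set s := c / (1 + Y j)
  have hs : 0 ≤ s := div_nonneg hc hpos.le
  have hle : ∀ l, (Pi.single j c : Fin n → ℝ) l ≤ (s • Y) l + s := by
    intro l
    rcases eq_or_ne l j with rfl | hl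
    · have : s * (1 + Y l) = c := div_mul_cancel₀ c hpos.ne'
      simp only [Pi.single_eq_same, Pi.smul_apply, smul_eq_mul]
      linarith
    · simp only [Pi.single_eq_of_ne hl, Pi.smul_apply, smul_eq_mul]
      nlinarith [hY l]
  linarith [hhom.apply_le_apply_add hmono hle i, hray s hs]

theorem maxDominion_of_tendsto_exp (hmono : Monotone T) {α : ℝ} {u : ℕ → Fin n → ℝ}
    (hu : ∀ k i, α + u k i ≤ T (u k) i) (hu0 : ∀ k, u k ≤ 0) {E : Fin n → ℝ}
    (hE : Tendsto (fun k i => Real.exp (u k i)) atTop (𝓝 E)) (hne : {i | 0 < E i}.Nonempty) :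
    MaxDominion n T {i | 0 < E i} := by
  refine ⟨hne, α + ⨅ i, Real.log (E i / 2), fun i (hi : 0 < E i) t ht => ?_⟩
  have hEi := tendsto_pi_nhds.1 hE
  have hbig : ∀ᶠ k in atTop, Real.log (E i / 2) < u k i :=
    ((hEi i).eventually (lt_mem_nhds (half_lt_self hi))).mono fun k hk =>
      (Real.log_lt_iff_lt_exp (half_pos hi)).2 hk
  have hsmall : ∀ᶠ k in atTop, ∀ j, ¬ 0 < E j → u k j ≤ -t := by
    refine eventually_all.2 fun j => ?_
    by_cases hj : 0 < E j
    · exact .of_forall fun _ h => absurd hj h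
    · exact ((hEi j).eventually (gt_mem_nhds ((not_lt.1 hj).trans_lt (Real.exp_pos (-t))))).mono
        fun k hk _ => Real.exp_le_exp.1 hk.le
  obtain ⟨k, hki, hkt⟩ := (hbig.and hsmall).exists
  have hle : u k ≤ {i | 0 < E i}ᶜ.indicator fun _ => -t := fun j => by
    by_cases hj : 0 < E j
    · simpa [hj] using hu0 k j
    · simpa [hj] using hkt j hj
  calc α + ⨅ i, Real.log (E i / 2) ≤ α + u k i := by
        linarith [ciInf_le (Finite.bddBelow_range fun i => Real.log (E i / 2)) i]
    _ ≤ T (u k) i := hu k i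
    _ ≤ T ({i | 0 < E i}ᶜ.indicator fun _ => -t) i := hmono hle i

theorem exists_normalized_mem_addSliceSpace (hhom : AddHomog n T) {α β : ℝ}
    (hunb : ¬ ∃ M : ℝ, ∀ x ∈ addSliceSpace n T α β, hilbertSeminorm n x ≤ M) {M : ℝ}
    (hM : 0 ≤ M) : ∃ u ∈ addSliceSpace n T α β, ∃ m > M, u ≤ 0 ∧ (∃ i, u i = 0) ∧
      m⁻¹ • u ∈ Icc (-1) 0 ∧ ∃ j, (m⁻¹ • u) j = -1 := by
  push Not at hunb
  obtain ⟨x, hx, hMx⟩ := hunb M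
  obtain ⟨i, j, hij⟩ := exists_lt_sub_of_lt_hilbertSeminorm hM hMx
  have : Nonempty (Fin n) := ⟨i⟩
  obtain ⟨imax, himax⟩ := Finite.exists_max x
  obtain ⟨imin, himin⟩ := Finite.exists_min x
  have hm : M < x imax - x imin := hij.trans_le (by linarith [himax i, himin j])
  have hm0 : 0 < x imax - x imin := hM.trans_lt hm
  refine ⟨_, hhom.add_mem_addSliceSpace hx (-x imax), _, hm, fun l => ?_, ⟨imax, by simp⟩,
    ⟨fun l => ?_, fun l => ?_⟩, imin, ?_⟩
  · simpa using himax l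
  · simp only [Pi.neg_apply, Pi.one_apply, Pi.smul_apply, smul_eq_mul, ← div_eq_inv_mul]
    rw [le_div_iff₀ hm0]
    linarith [himin l]
  · simp only [Pi.zero_apply, Pi.smul_apply, smul_eq_mul, ← div_eq_inv_mul]
    exact div_nonpos_of_nonpos_of_nonneg (by linarith [himax l]) hm0.le
  · simp only [Pi.smul_apply, smul_eq_mul, ← div_eq_inv_mul]
    rw [div_eq_iff hm0.ne']
    ring

theorem exists_invariant_maxDominion_of_unbounded (hmono : Monotone T) (hhom : AddHomog n T)
    (hconv : ∀ i, ConvexOn ℝ univ fun x => T x i) {α β : ℝ}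
    (hunb : ¬ ∃ M : ℝ, ∀ x ∈ addSliceSpace n T α β, hilbertSeminorm n x ≤ M) :
    ∃ Θ Δ : Set (Fin n), Θ.Nonempty ∧ Δ.Nonempty ∧ Disjoint Θ Δ ∧
      (∀ i ∈ Θ, Supp n (fun x => T x i) ⊆ Θ) ∧ MaxDominion n T Δ := by
  choose u hu m hm hu0 hzero hy hmin using
    fun k : ℕ => exists_normalized_mem_addSliceSpace hhom hunb (Nat.cast_nonneg k)
  obtain ⟨⟨Y, E⟩, ⟨hYmem, -⟩, ψ, hψ, hlim⟩ := (isCompact_Icc.prod isCompact_Icc).tendsto_subseq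
    (x := fun k => ((m k)⁻¹ • u k, fun i => Real.exp (u k i))) (s := Icc (-1) 0 ×ˢ Icc 0 1)
    fun k => ⟨hy k, fun i => (Real.exp_pos _).le, fun i => Real.exp_le_one_iff.2 (hu0 k i)⟩
  have hY : Tendsto (fun k => (m (ψ k))⁻¹ • u (ψ k)) atTop (𝓝 Y) :=
    (continuous_fst.tendsto _).comp hlim
  have hE : Tendsto (fun k i => Real.exp (u (ψ k) i)) atTop (𝓝 E) :=
    (continuous_snd.tendsto _).comp hlim
  have hmψ : Tendsto (fun k => m (ψ k)) atTop atTop :=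
    (tendsto_atTop_mono (fun k => (hm k).le) tendsto_natCast_atTop_atTop).comp hψ.tendsto_atTop
  have hΔ : {i | 0 < E i}.Nonempty := by
    obtain ⟨i, hi⟩ := exists_apply_eq_of_tendsto hE (c := 1) fun k =>
      (hzero (ψ k)).imp fun i hi => by simp [hi]
    exact ⟨i, by simp [hi]⟩
  refine ⟨{i | Y i = -1}, {i | 0 < E i}, exists_apply_eq_of_tendsto hY fun k => hmin (ψ k), hΔ,
    disjoint_left.2 fun i (hi : Y i = -1) (hEi : 0 < E i) => ?_, fun i hi => ?_,
    maxDominion_of_tendsto_exp hmono (fun k i => (hu (ψ k) i).1) (fun k => hu0 (ψ k)) hE hΔ⟩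
  · have hbot := tendsto_atBot_of_tendsto_inv_smul hmψ hY (i := i) (by rw [hi]; norm_num)
    exact hEi.ne' (tendsto_nhds_unique (tendsto_pi_nhds.1 hE i)
      (Real.tendsto_exp_comp_nhds_zero.2 hbot))
  · refine supp_subset_of_apply_smul_le hmono hhom (hconv i) (fun l => hYmem.1 l) fun s hs => ?_
    have := apply_smul_le_of_tendsto (hconv i) (fun k => (hu (ψ k) i).2) hmψ hY hs
    rw [show Y i = -1 from hi] at this
    linarith

theorem apply_indicator_le (hmono : Monotone T) (hhom : AddHomog n T) {Θ : Set (Fin n)}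
    (hinv : ∀ i ∈ Θ, Supp n (fun x => T x i) ⊆ Θ) {β t : ℝ} (ht : 0 ≤ t)
    (hβ : ∀ i, T 0 i ≤ β) (i : Fin n) :
    T (Θ.indicator fun _ => -t) i ≤ β + Θ.indicator (fun _ => -t) i := by
  by_cases hi : i ∈ Θ
  · have heq : T (Θ.indicator fun _ => -t) i = T (fun _ => -t) i :=
      apply_eq_of_supp_subset (hinv i hi) fun j hj => indicator_of_mem hj _
    have hconst := hhom.apply_le_apply_add hmono (x := fun _ => -t) (y := 0) (c := -t)
      (fun _ => by simp) i
    rw [heq, indicator_of_mem hi]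
    linarith [hβ i]
  · rw [indicator_of_notMem hi, add_zero]
    exact (hmono (indicator_nonpos fun _ _ => neg_nonpos.2 ht) i).trans (hβ i)

theorem exists_mem_addSliceSpace_of_invariant (hmono : Monotone T) (hhom : AddHomog n T)
    {Θ Δ : Set (Fin n)} (hdisj : Disjoint Θ Δ) (hinv : ∀ i ∈ Θ, Supp n (fun x => T x i) ⊆ Θ)
    {α₀ α β t : ℝ} (ht : 0 ≤ t) (hα₀ : ∀ i ∈ Δ, α₀ ≤ T (Δᶜ.indicator fun _ => -t) i)
    (hαα₀ : α ≤ α₀) (hα : ∀ i, α ≤ T 0 i) (hβ : ∀ i, T 0 i ≤ β) :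
    ∃ w ∈ addSliceSpace n T α β, (∀ i ∈ Δ, w i = 0) ∧ ∀ j ∈ Θ, w j = -t := by
  set a : Fin n → ℝ := Δᶜ.indicator fun _ => -t with ha
  have ha0 : a ≤ 0 := indicator_nonpos fun _ _ => neg_nonpos.2 ht
  have hat : ∀ i, -t ≤ a i := fun i => by by_cases hi : i ∈ Δ <;> simp [ha, hi, ht]
  have h0 : ∀ i, T 0 i ≤ β + (0 : Fin n → ℝ) i := by simpa using hβ
  obtain ⟨w, hw⟩ := exists_isLeast_subsolution hmono ha0 h0
  have hlower : ∀ i, α + w i ≤ T w i := by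
    intro i
    rcases (hw.1.1 i).lt_or_eq with hlt | heq
    · linarith [hw.le_apply_of_lt hmono hlt, hα i, hβ i]
    by_cases hi : i ∈ Δ
    · have : a i = 0 := by simp [ha, hi]
      linarith [hα₀ i hi, hmono hw.1.1 i]
    · have : a i = -t := by simp [ha, hi]
      linarith [hα i, hhom.apply_le_apply_add hmono (x := 0) (y := w) (c := t)
        (fun l => by simp only [Pi.zero_apply]; linarith [hat l, hw.1.1 l]) i]
  have hw0 : w ≤ 0 := hw.2 ⟨ha0, h0⟩
  have hwΘ : w ≤ Θ.indicator fun _ => -t := by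
    refine hw.2 ⟨fun i => ?_, apply_indicator_le hmono hhom hinv ht hβ⟩
    by_cases hi : i ∈ Θ
    · simp [ha, hi, disjoint_left.1 hdisj hi]
    · simpa [hi] using ha0 i
  refine ⟨w, fun i => ⟨hlower i, hw.1.2 i⟩, fun i hi => le_antisymm (hw0 i) ?_,
    fun j hj => le_antisymm (by simpa [hj] using hwΘ j) ((hat j).trans (hw.1.1 j))⟩
  simpa [ha, hi] using hw.1.1 i

theorem unbounded_of_invariant_maxDominion (hmono : Monotone T) (hhom : AddHomog n T)
    {Θ Δ : Set (Fin n)} (hΘ : Θ.Nonempty) (hdisj : Disjoint Θ Δ)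
    (hinv : ∀ i ∈ Θ, Supp n (fun x => T x i) ⊆ Θ) (hdom : MaxDominion n T Δ) :
    ∃ α β : ℝ, α ≤ β ∧ ¬ ∃ M : ℝ, ∀ x ∈ addSliceSpace n T α β, hilbertSeminorm n x ≤ M := by
  obtain ⟨⟨i₀, hi₀⟩, α₀, hα₀⟩ := hdom
  obtain ⟨j₀, hj₀⟩ := hΘ
  have hβ : ∀ i, T 0 i ≤ ⨆ l, T 0 l := le_ciSup (Finite.bddAbove_range _)
  have hα : ∀ i, min α₀ (⨅ l, T 0 l) ≤ T 0 i := fun i =>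
    (min_le_right _ _).trans (ciInf_le (Finite.bddBelow_range _) i)
  refine ⟨_, _, (hα i₀).trans (hβ i₀), fun ⟨M, hM⟩ => ?_⟩
  obtain ⟨w, hw, hwΔ, hwΘ⟩ := exists_mem_addSliceSpace_of_invariant hmono hhom hdisj hinv
    (t := max M 0 + 1) (by positivity) (fun i hi => hα₀ i hi _ (by positivity))
    (min_le_left _ _) hα hβ
  have := sub_le_hilbertSeminorm w i₀ j₀
  rw [hwΔ i₀ hi₀, hwΘ j₀ hj₀] at this
  linarith [hM w hw, le_max_left M 0]

end Topical

theorem stmt15_general (n : ℕ)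
    (T : (Fin n → ℝ) → (Fin n → ℝ))
    (hmono : Monotone T) (hhom : AddHomog n T)
    (hconv : ∀ i, ConvexOn ℝ Set.univ (fun x => T x i)) :
    (∃ α β : ℝ, α ≤ β ∧
        ¬ ∃ M : ℝ, ∀ x ∈ addSliceSpace n T α β, hilbertSeminorm n x ≤ M) ↔
    (∃ Θ Δ : Set (Fin n), Θ.Nonempty ∧ Δ.Nonempty ∧ Disjoint Θ Δ ∧
        (∀ i ∈ Θ, Supp n (fun x => T x i) ⊆ Θ) ∧ MaxDominion n T Δ) := by
  constructor
  · rintro ⟨α, β, -, hunb⟩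
    exact exists_invariant_maxDominion_of_unbounded hmono hhom hconv hunb
  · rintro ⟨Θ, Δ, hΘ, -, hdisj, hinv, hdom⟩
    exact unbounded_of_invariant_maxDominion hmono hhom hΘ hdisj hinv hdom

theorem stmt15 (n : ℕ) (hn : 1 ≤ n)
    (T : (Fin n → ℝ) → (Fin n → ℝ))
    (hmono : Monotone T) (hhom : AddHomog n T)
    (hconv : ∀ i, ConvexOn ℝ Set.univ (fun x => T x i)) :
    (∃ α β : ℝ, α ≤ β ∧
        ¬ ∃ M : ℝ, ∀ x ∈ addSliceSpace n T α β, hilbertSeminorm n x ≤ M) ↔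
    (∃ Θ Δ : Set (Fin n), Θ.Nonempty ∧ Δ.Nonempty ∧ Disjoint Θ Δ ∧
        (∀ i ∈ Θ, Supp n (fun x => T x i) ⊆ Θ) ∧ MaxDominion n T Δ) :=
  stmt15_general n T hmono hhom hconv
end

section
/- Let n ≥ 1 and let f : ℝ₍₎₀ⁿ → ℝ₍₎₀ⁿ be monotone and positively homogeneous. Then the following are equivalent: (a) there is no pair (I, J) of disjoint subsets of {1,…,n} such that I is a multiplicative MIN-dominion for f and J is a multiplicative MAX-dominion for f; (b) for every d ∈ ℝ₍₎₀ⁿ, the map x ↦ (d_1·f_1(x), …, d_n·f_n(x)) has a positive eigenvector, i.e., there exist λ > 0 and u ∈ ℝ₍₎₀ⁿ with d_i·f_i(u) = λ·u_i for all i. -/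
/-- `Δ` is a multiplicative MIN-dominion for `f`. -/
def MultMinDominion (n : ℕ) (f : (Fin n → ℝ) → (Fin n → ℝ)) (Δ : Set (Fin n)) : Prop :=
  Δ.Nonempty ∧ ∃ C : ℝ, ∀ i ∈ Δ, ∀ t : ℝ, 0 ≤ t →
    f (fun j => Real.exp (Δᶜ.indicator (fun _ => t) j)) i ≤ C

/-- `Δ` is a multiplicative MAX-dominion for `f`. -/
def MultMaxDominion (n : ℕ) (f : (Fin n → ℝ) → (Fin n → ℝ)) (Δ : Set (Fin n)) : Prop :=
  Δ.Nonempty ∧ ∃ c : ℝ, 0 < c ∧ ∀ i ∈ Δ, ∀ t : ℝ, 0 ≤ t →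
    c ≤ f (fun j => Real.exp (Δᶜ.indicator (fun _ => -t) j)) i

/-!
Conjugating by `exp` turns `F x = (dᵢ fᵢ(x))ᵢ` into a topical map `G = log ∘ F ∘ exp` on `ℝⁿ`
(monotone, and commuting with the addition of constant vectors), and a positive eigenvector of
`F` into an additive eigenvector `G v = v + c • 1`. A topical map is nonexpansive for the sup
norm, so it induces a 1-Lipschitz map on `ℝⁿ` modulo constants. If an orbit of that map is bounded,
the map has a fixed point, which is an additive eigenvector of `G`. Otherwise the oscillation
`max x - min x` of the orbit `x = Gᵏ 0` is unbounded; along an ultrafilter on which it tends to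
infinity, the coordinates staying at bounded distance from `min x` form a MIN-dominion, those
staying at bounded distance from `max x` a MAX-dominion, and no coordinate can do both.

Conversely, if `I` is a MIN-dominion with bound `C` and `J` a disjoint MAX-dominion with bound
`c`, take `d = ε` on `I` and `1` elsewhere. Testing a positive eigenvector `u` of `F` against
the vectors in the definition of the dominions, at a coordinate where `u` is maximal on `I` and at
one where it is minimal on `J`, puts the eigenvalue in `[c, ε C]`, which is empty for small `ε`.
-/

open Filter Function Metric Real Topology

section FixedPoint

variable {E : Type*} [NormedAddCommGroup E] [NormedSpace ℝ E]

theorem dist_le_two_mul_of_eq_smul_add_smul {T : E → E} (hT : LipschitzWith 1 T) {x : E} {R : ℝ}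
    (hR : ∀ k, dist (T^[k] x) x ≤ R) {s : ℝ} (hs₀ : 0 ≤ s) (hs₁ : s < 1) {y : E}
    (hy : y = s • T y + (1 - s) • x) : dist y x ≤ 2 * R := by
  have hstep : ∀ k, dist y (T^[k + 1] x) ≤ s * dist y (T^[k] x) + (1 - s) * R := by
    intro k
    have hT' : dist (T y) (T (T^[k] x)) ≤ dist y (T^[k] x) := by
      simpa using hT.dist_le_mul y (T^[k] x)
    have hR' : dist x (T^[k + 1] x) ≤ R := dist_comm x _ ▸ hR (k + 1)
    rw [iterate_succ_apply'] at hR' ⊢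
    calc dist y (T (T^[k] x))
        = ‖s • (T y - T (T^[k] x)) + (1 - s) • (x - T (T^[k] x))‖ := by
          rw [dist_eq_norm]; congr 1; nth_rw 1 [hy]; module
      _ ≤ s * dist (T y) (T (T^[k] x)) + (1 - s) * dist x (T (T^[k] x)) := by
          refine (norm_add_le _ _).trans ?_
          rw [norm_smul, norm_smul, Real.norm_of_nonneg hs₀, Real.norm_of_nonneg (by linarith),
            ← dist_eq_norm, ← dist_eq_norm]
      _ ≤ s * dist y (T^[k] x) + (1 - s) * R := by gcongr
  have hgeom : ∀ k, dist y (T^[k] x) ≤ R + s ^ k * dist y x := by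
    intro k
    induction k with
    | zero => simpa using dist_nonneg.trans (hR 0)
    | succ k ih =>
      calc _ ≤ _ := hstep k
        _ ≤ s * (R + s ^ k * dist y x) + (1 - s) * R := by gcongr
        _ = R + s ^ (k + 1) * dist y x := by ring
  have hlim : Tendsto (fun k => 2 * R + s ^ k * dist y x) atTop (𝓝 (2 * R)) := by
    simpa using
      ((tendsto_pow_atTop_nhds_zero_of_lt_one hs₀ hs₁).mul_const (dist y x)).const_add (2 * R)
  refine ge_of_tendsto' hlim fun k => ?_
  calc dist y x ≤ dist y (T^[k] x) + dist (T^[k] x) x := dist_triangle _ _ _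
    _ ≤ _ := by linarith [hgeom k, hR k]

/-- The fixed points of the contractions `y ↦ s • T y + (1 - s) • x` stay in a fixed ball and
are `O(1 - s)`-almost fixed by `T`; a minimiser of `dist y (T y)` on that ball is a fixed point. -/
theorem exists_isFixedPt_of_lipschitzWith_one [FiniteDimensional ℝ E] {T : E → E}
    (hT : LipschitzWith 1 T) {x : E} (hx : Bornology.IsBounded (Set.range fun k => T^[k] x)) :
    ∃ a, IsFixedPt T a := by
  obtain ⟨R, hR⟩ := (isBounded_iff_subset_closedBall x).1 hx
  have hR' : ∀ k, dist (T^[k] x) x ≤ R := fun k => hR ⟨k, rfl⟩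
  have hR0 : 0 ≤ R := dist_nonneg.trans (hR' 0)
  have happrox : ∀ s ∈ Set.Ioo (0 : ℝ) 1, ∃ y ∈ closedBall x (2 * R),
      dist y (T y) ≤ (1 - s) * (3 * R) := by
    rintro s ⟨hs₀, hs₁⟩
    have hU : ContractingWith ⟨s, hs₀.le⟩ (fun y => s • T y + (1 - s) • x) := by
      refine ⟨hs₁, LipschitzWith.of_dist_le_mul fun y z => ?_⟩
      rw [dist_add_right, dist_smul₀, Real.norm_of_nonneg hs₀.le]
      exact mul_le_mul_of_nonneg_left (by simpa using hT.dist_le_mul y z) hs₀.le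
    set y := hU.fixedPoint
    have hy : y = s • T y + (1 - s) • x := hU.fixedPoint_isFixedPt.symm
    have hyx : dist y x ≤ 2 * R := dist_le_two_mul_of_eq_smul_add_smul hT hR' hs₀.le hs₁ hy
    refine ⟨y, hyx, ?_⟩
    calc dist y (T y) = (1 - s) * dist x (T y) := by
          rw [dist_eq_norm, dist_eq_norm, ← Real.norm_of_nonneg (by linarith : (0 : ℝ) ≤ 1 - s),
            ← norm_smul]
          nth_rw 1 [hy]; congr 1; module
      _ ≤ (1 - s) * (3 * R) := by
          gcongr
          calc dist x (T y) ≤ dist x (T x) + dist (T x) (T y) := dist_triangle _ _ _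
            _ ≤ R + dist x y := by
                gcongr
                · simpa [dist_comm] using hR' 1
                · simpa using hT.dist_le_mul x y
            _ ≤ 3 * R := by rw [dist_comm]; linarith
  obtain ⟨a, -, ha⟩ := (isCompact_closedBall x (2 * R)).exists_isMinOn
    (nonempty_closedBall.2 (by linarith)) (continuous_id.dist hT.continuous).continuousOn
  refine ⟨a, (dist_le_zero.1 ?_).symm⟩
  have hlim : Tendsto (fun s : ℝ => (1 - s) * (3 * R)) (𝓝[<] 1) (𝓝 0) := by
    refine tendsto_nhdsWithin_of_tendsto_nhds (Continuous.tendsto' ?_ _ _ (by simp))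
    fun_prop
  refine ge_of_tendsto hlim ?_
  filter_upwards [Ioo_mem_nhdsLT (show (0 : ℝ) < 1 by norm_num)] with s hs
  obtain ⟨y, hyK, hy⟩ := happrox s hs
  exact (ha hyK).trans hy

end FixedPoint

section Ultrafilter

variable {α β : Type*} [LinearOrder β]

theorem Ultrafilter.tendsto_atTop_of_not_isBoundedUnder {𝒰 : Ultrafilter α} {u : α → β}
    (h : ¬IsBoundedUnder (· ≤ ·) 𝒰 u) : Tendsto u 𝒰 atTop := by
  refine tendsto_atTop.2 fun b => ?_
  have : ¬∀ᶠ a in 𝒰, u a < b := fun hb =>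
    h (isBoundedUnder_of_eventually_le (hb.mono fun _ => le_of_lt))
  exact (Ultrafilter.eventually_not.2 this).mono fun _ => not_lt.1

theorem exists_ultrafilter_tendsto_atTop [Nonempty β] {u : α → β}
    (h : ¬BddAbove (Set.range u)) : ∃ 𝒰 : Ultrafilter α, Tendsto u 𝒰 atTop := by
  have : (comap u atTop).NeBot := comap_neBot fun t ht => by
    obtain ⟨b, hb⟩ := mem_atTop_sets.1 ht
    obtain ⟨_, ⟨a, rfl⟩, hab⟩ := not_bddAbove_iff.1 h b
    exact ⟨a, hb _ hab.le⟩
  exact ⟨Ultrafilter.of _, tendsto_comap.mono_left (Ultrafilter.of_le _)⟩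

end Ultrafilter

structure IsTopical {ι : Type*} (G : (ι → ℝ) → ι → ℝ) : Prop where
  monotone : Monotone G
  map_add_const : ∀ x (c : ℝ), G (x + c • 1) = G x + c • 1

namespace IsTopical

variable {ι : Type*} {G : (ι → ℝ) → ι → ℝ}

theorem map_sub_const (hG : IsTopical G) (x : ι → ℝ) (c : ℝ) : G (x - c • 1) = G x - c • 1 := by
  simpa [sub_eq_add_neg] using hG.map_add_const x (-c)

theorem dual (hG : IsTopical G) : IsTopical fun x => -G (-x) where
  monotone _ _ hxy := neg_le_neg (hG.monotone (neg_le_neg hxy))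
  map_add_const x c := by
    rw [neg_add, ← sub_eq_add_neg, hG.map_sub_const]; abel

theorem norm_sub_le [Fintype ι] (hG : IsTopical G) (x y : ι → ℝ) : ‖G x - G y‖ ≤ ‖x - y‖ := by
  have key : ∀ x y : ι → ℝ, ∀ i, G x i - G y i ≤ ‖x - y‖ := fun x y i => by
    have hle : x ≤ y + ‖x - y‖ • 1 := fun j => by
      simpa [sub_le_iff_le_add', add_comm] using
        (le_abs_self _).trans (norm_le_pi_norm (x - y) j)
    simpa [hG.map_add_const, sub_le_iff_le_add', add_comm] using hG.monotone hle i
  refine (pi_norm_le_iff_of_nonneg (norm_nonneg _)).2 fun i => abs_le.2 ⟨?_, key x y i⟩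
  have := key y x i
  rw [norm_sub_rev] at this
  simp only [Pi.sub_apply]
  linarith

theorem iterate_add_le (hG : IsTopical G) {x : ι → ℝ} {c : ℝ} (hx : x + c • 1 ≤ G x) (k : ℕ) :
    G^[k] x + c • 1 ≤ G (G^[k] x) := by
  induction k with
  | zero => exact hx
  | succ k ih =>
    rw [iterate_succ_apply', ← hG.map_add_const]
    exact hG.monotone ih

theorem iterate_le_add (hG : IsTopical G) {x : ι → ℝ} {c : ℝ} (hx : G x ≤ x + c • 1) (k : ℕ) :
    G (G^[k] x) ≤ G^[k] x + c • 1 := by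
  induction k with
  | zero => exact hx
  | succ k ih =>
    rw [iterate_succ_apply', ← hG.map_add_const]
    exact hG.monotone ih

end IsTopical

section ConstQuotient

variable {ι : Type*} {G : (ι → ℝ) → ι → ℝ}

abbrev ConstQuotient (ι : Type*) := (ι → ℝ) ⧸ (ℝ ∙ (1 : ι → ℝ))

instance [Fintype ι] : IsClosed ((ℝ ∙ (1 : ι → ℝ) : Submodule ℝ (ι → ℝ)) : Set (ι → ℝ)) :=
  Submodule.closed_of_finiteDimensional _

/-- Defined through a chosen representative; for topical `G` it does not depend on the choice
(`IsTopical.quotConst_mk`). -/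
noncomputable def quotConst (G : (ι → ℝ) → ι → ℝ) : ConstQuotient ι → ConstQuotient ι :=
  fun q => Submodule.Quotient.mk (G q.out)

theorem exists_eq_add_smul_of_isFixedPt_quotConst {q : ConstQuotient ι}
    (hq : IsFixedPt (quotConst G) q) : ∃ v : ι → ℝ, ∃ c : ℝ, G v = v + c • 1 := by
  obtain ⟨c, hc⟩ := Submodule.mem_span_singleton.1
    ((Submodule.Quotient.eq _).1 (hq.trans (Submodule.Quotient.mk_out q).symm))
  exact ⟨q.out, c, by rw [hc]; abel⟩

theorem IsTopical.mk_map_eq_mk_map (hG : IsTopical G) {x y : ι → ℝ}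
    (h : (Submodule.Quotient.mk x : ConstQuotient ι) = Submodule.Quotient.mk y) :
    (Submodule.Quotient.mk (G x) : ConstQuotient ι) = Submodule.Quotient.mk (G y) := by
  obtain ⟨c, hc⟩ := Submodule.mem_span_singleton.1 ((Submodule.Quotient.eq _).1 h)
  rw [eq_sub_iff_add_eq'] at hc
  rw [Submodule.Quotient.eq, ← hc, hG.map_add_const, add_sub_cancel_left]
  exact Submodule.smul_mem _ c (Submodule.mem_span_singleton_self _)

theorem IsTopical.quotConst_mk (hG : IsTopical G) (x : ι → ℝ) :
    quotConst G (Submodule.Quotient.mk x) = Submodule.Quotient.mk (G x) :=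
  hG.mk_map_eq_mk_map (Submodule.Quotient.mk_out _)

theorem IsTopical.lipschitzWith_quotConst [Fintype ι] (hG : IsTopical G) :
    LipschitzWith 1 (quotConst G) := by
  refine LipschitzWith.of_dist_le_mul fun p q => ?_
  obtain ⟨x, rfl⟩ := Submodule.Quotient.mk_surjective _ p
  obtain ⟨y, rfl⟩ := Submodule.Quotient.mk_surjective _ q
  rw [NNReal.coe_one, one_mul, hG.quotConst_mk, hG.quotConst_mk, dist_eq_norm, dist_eq_norm,
    ← Submodule.Quotient.mk_sub, ← Submodule.Quotient.mk_sub]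
  refine le_of_forall_pos_lt_add fun ε hε => ?_
  obtain ⟨z, hz, hzε⟩ :=
    Submodule.Quotient.norm_mk_lt (Submodule.Quotient.mk (x - y) : ConstQuotient ι) hε
  have hy : (Submodule.Quotient.mk (x - z) : ConstQuotient ι) = Submodule.Quotient.mk y := by
    rw [Submodule.Quotient.mk_sub, hz, Submodule.Quotient.mk_sub, sub_sub_cancel]
  calc ‖(Submodule.Quotient.mk (G x - G y) : ConstQuotient ι)‖
      = ‖(Submodule.Quotient.mk (G x - G (x - z)) : ConstQuotient ι)‖ := by
        rw [Submodule.Quotient.mk_sub, Submodule.Quotient.mk_sub, hG.mk_map_eq_mk_map hy]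
    _ ≤ ‖x - (x - z)‖ := (Submodule.Quotient.norm_mk_le _ _).trans (hG.norm_sub_le _ _)
    _ < _ := by rwa [sub_sub_cancel]

theorem norm_mk_le_iSup_sub_iInf [Fintype ι] [Nonempty ι] (x : ι → ℝ) :
    ‖(Submodule.Quotient.mk x : ConstQuotient ι)‖ ≤ (⨆ i, x i) - ⨅ i, x i := by
  have hmk : (Submodule.Quotient.mk x : ConstQuotient ι) =
      Submodule.Quotient.mk (x - (⨅ i, x i) • 1) := by
    rw [Submodule.Quotient.eq, sub_sub_cancel]
    exact Submodule.smul_mem _ _ (Submodule.mem_span_singleton_self _)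
  rw [hmk]
  refine (Submodule.Quotient.norm_mk_le _ _).trans ?_
  obtain ⟨i₀⟩ := ‹Nonempty ι›
  have hlow : ∀ i, (⨅ j, x j) ≤ x i := ciInf_le (Finite.bddBelow_range x)
  have hup : ∀ i, x i ≤ ⨆ j, x j := le_ciSup (Finite.bddAbove_range x)
  refine (pi_norm_le_iff_of_nonneg (by linarith [hlow i₀, hup i₀])).2 fun i => ?_
  rw [Real.norm_eq_abs, abs_le]
  simp only [Pi.sub_apply, Pi.smul_apply, Pi.one_apply, smul_eq_mul, mul_one]
  constructor <;> linarith [hlow i, hup i]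

end ConstQuotient

section Dominion

variable {ι : Type*}

def AddMinDominion (G : (ι → ℝ) → ι → ℝ) (I : Set ι) : Prop :=
  I.Nonempty ∧ ∃ C : ℝ, ∀ i ∈ I, ∀ t : ℝ, 0 ≤ t → G (Iᶜ.indicator fun _ => t) i ≤ C

def AddMaxDominion (G : (ι → ℝ) → ι → ℝ) (J : Set ι) : Prop :=
  J.Nonempty ∧ ∃ c : ℝ, ∀ j ∈ J, ∀ t : ℝ, 0 ≤ t → c ≤ G (Jᶜ.indicator fun _ => -t) j

theorem AddMinDominion.addMaxDominion_of_dual {G : (ι → ℝ) → ι → ℝ} {J : Set ι}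
    (h : AddMinDominion (fun x => -G (-x)) J) : AddMaxDominion G J := by
  obtain ⟨hJ, C, hC⟩ := h
  refine ⟨hJ, -C, fun j hj t ht => ?_⟩
  have hneg : -(Jᶜ.indicator fun _ => t) = Jᶜ.indicator fun _ => -t := by
    rw [← Set.indicator_neg']; rfl
  have := hC j hj t ht
  simp only [hneg, Pi.neg_apply] at this
  linarith

namespace IsTopical

variable [Finite ι] {G : (ι → ℝ) → ι → ℝ} {α : Type*}

theorem addMinDominion_of_ultrafilter (hG : IsTopical G) (𝒰 : Ultrafilter α) {y : α → ι → ℝ}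
    {μ : ℝ} (hy : ∀ a, 0 ≤ y a) (hzero : ∀ a, ∃ i, y a i = 0)
    (hμ : ∀ a, G (y a) ≤ y a + μ • 1) :
    AddMinDominion G {i | IsBoundedUnder (· ≤ ·) 𝒰 fun a => y a i} := by
  set I := {i | IsBoundedUnder (· ≤ ·) 𝒰 fun a => y a i}
  have hlarge : ∀ t, ∀ᶠ a in 𝒰, ∀ k ∉ I, t ≤ y a k := fun t =>
    eventually_all.2 fun k => by
      by_cases hk : k ∈ I
      · exact .of_forall fun _ h => absurd hk h
      · exact ((Ultrafilter.tendsto_atTop_of_not_isBoundedUnder hk).eventually_ge_atTop t).mono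
          fun _ h _ => h
  refine ⟨?_, ?_⟩
  · by_contra hI
    obtain ⟨a, ha⟩ := (hlarge 1).exists
    obtain ⟨i, hi⟩ := hzero a
    have := ha i fun hi' => hI ⟨i, hi'⟩
    linarith
  · choose! B hB using fun i (hi : i ∈ I) => hi.eventually_le
    obtain ⟨C, hC⟩ : ∃ C, ∀ᶠ a in 𝒰, ∀ i ∈ I, y a i ≤ C :=
      ⟨⨆ i, B i, I.toFinite.eventually_all.2 fun i hi =>
        (hB i hi).mono fun _ h => h.trans (le_ciSup (Finite.bddAbove_range B) i)⟩
    refine ⟨C + μ, fun i hi t ht => ?_⟩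
    obtain ⟨a, haC, hat⟩ := (hC.and (hlarge t)).exists
    have hle : Iᶜ.indicator (fun _ => t) ≤ y a := fun k => by
      by_cases hk : k ∈ I
      · simpa [hk] using hy a k
      · simpa [hk] using hat k hk
    calc G (Iᶜ.indicator fun _ => t) i ≤ G (y a) i := hG.monotone hle i
      _ ≤ y a i + μ := by simpa using hμ a i
      _ ≤ C + μ := by linarith [haC i hi]

/-- The MIN-dominion comes from `x - min x`, the MAX-dominion from `max x - x` and the dual map;
a coordinate in both would keep `max x - min x` bounded. -/
theorem exists_disjoint_dominions [Nonempty ι] (hG : IsTopical G) (𝒰 : Ultrafilter α)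
    (x : α → ι → ℝ) {lam μ : ℝ}
    (hosc : Tendsto (fun a => (⨆ i, x a i) - ⨅ i, x a i) 𝒰 atTop)
    (hlam : ∀ a, x a + lam • 1 ≤ G (x a)) (hμ : ∀ a, G (x a) ≤ x a + μ • 1) :
    ∃ I J : Set ι, Disjoint I J ∧ AddMinDominion G I ∧ AddMaxDominion G J := by
  have hinf : ∀ a i, (⨅ j, x a j) ≤ x a i := fun a => ciInf_le (Finite.bddBelow_range _)
  have hsup : ∀ a i, x a i ≤ ⨆ j, x a j := fun a => le_ciSup (Finite.bddAbove_range _)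
  refine ⟨_, _, ?_, hG.addMinDominion_of_ultrafilter 𝒰 (y := fun a => x a - (⨅ i, x a i) • 1)
    (μ := μ) ?_ ?_ ?_, (hG.dual.addMinDominion_of_ultrafilter 𝒰
      (y := fun a => (⨆ i, x a i) • 1 - x a) (μ := -lam) ?_ ?_ ?_).addMaxDominion_of_dual⟩
  · refine Set.disjoint_left.2 fun i hlo hhi => not_isBoundedUnder_of_tendsto_atTop hosc ?_
    convert isBoundedUnder_le_add hlo hhi using 1
    ext a
    simp
  · exact fun a i => by simpa using hinf a i
  · exact fun a => (exists_eq_ciInf_of_finite (f := x a)).imp fun i hi => by simp [hi]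
  · intro a i
    have := hμ a i
    simp only [hG.map_sub_const, Pi.add_apply, Pi.sub_apply, Pi.smul_apply, Pi.one_apply,
      smul_eq_mul, mul_one] at this ⊢
    linarith
  · exact fun a i => by simpa using hsup a i
  · exact fun a => (exists_eq_ciSup_of_finite (f := x a)).imp fun i hi => by simp [hi]
  · intro a i
    have := hlam a i
    simp only [neg_sub, hG.map_sub_const, Pi.neg_apply, Pi.add_apply, Pi.sub_apply,
      Pi.smul_apply, Pi.one_apply, smul_eq_mul, mul_one] at this ⊢
    linarith

end IsTopical

end Dominion

theorem IsTopical.exists_eigenvector_or_dominions {ι : Type*} [Fintype ι] [Nonempty ι]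
    {G : (ι → ℝ) → ι → ℝ} (hG : IsTopical G) :
    (∃ v : ι → ℝ, ∃ c : ℝ, G v = v + c • 1) ∨
      ∃ I J : Set ι, Disjoint I J ∧ AddMinDominion G I ∧ AddMaxDominion G J := by
  by_cases hb : Bornology.IsBounded
      (Set.range fun k => (quotConst G)^[k] (Submodule.Quotient.mk 0 : ConstQuotient ι))
  · obtain ⟨q, hq⟩ := exists_isFixedPt_of_lipschitzWith_one hG.lipschitzWith_quotConst hb
    exact .inl (exists_eq_add_smul_of_isFixedPt_quotConst hq)
  · right
    have horbit : ∀ k, (quotConst G)^[k] (Submodule.Quotient.mk 0 : ConstQuotient ι) =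
        Submodule.Quotient.mk (G^[k] 0) := fun k =>
      ((Semiconj.iterate_right (fun x => (hG.quotConst_mk x).symm) k) 0).symm
    have hunb : ¬BddAbove (Set.range fun k => (⨆ i, G^[k] 0 i) - ⨅ i, G^[k] 0 i) := by
      rintro ⟨R, hR⟩
      refine hb (isBounded_iff_forall_norm_le.2 ⟨R, ?_⟩)
      rintro _ ⟨k, rfl⟩
      dsimp only
      rw [horbit]
      exact (norm_mk_le_iSup_sub_iInf _).trans (hR ⟨k, rfl⟩)
    obtain ⟨𝒰, h𝒰⟩ := exists_ultrafilter_tendsto_atTop hunb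
    exact hG.exists_disjoint_dominions 𝒰 (fun k => G^[k] 0) h𝒰
      (hG.iterate_add_le (c := ⨅ i, G 0 i) fun i => by
        simpa using ciInf_le (Finite.bddBelow_range _) i)
      (hG.iterate_le_add (c := ⨆ i, G 0 i) fun i => by
        simpa using le_ciSup (Finite.bddAbove_range _) i)

section LogConj

variable {ι : Type*} {d : ι → ℝ} {f : (ι → ℝ) → ι → ℝ}

noncomputable def logConj (d : ι → ℝ) (f : (ι → ℝ) → ι → ℝ) : (ι → ℝ) → ι → ℝ :=
  fun x i => log (d i * f (fun j => exp (x j)) i)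

theorem exp_logConj (hd : ∀ i, 0 < d i) (hpos : ∀ x, (∀ i, 0 < x i) → ∀ i, 0 < f x i)
    (x : ι → ℝ) (i : ι) : exp (logConj d f x i) = d i * f (fun j => exp (x j)) i :=
  exp_log (mul_pos (hd i) (hpos _ (fun _ => exp_pos _) i))

theorem isTopical_logConj (hd : ∀ i, 0 < d i) (hpos : ∀ x, (∀ i, 0 < x i) → ∀ i, 0 < f x i)
    (hmono : ∀ x y, (∀ i, 0 < x i) → (∀ i, 0 < y i) → x ≤ y → f x ≤ f y)
    (hhom : ∀ t : ℝ, 0 < t → ∀ x, (∀ i, 0 < x i) → f (t • x) = t • f x) :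
    IsTopical (logConj d f) where
  monotone x y hxy i := log_le_log (mul_pos (hd i) (hpos _ (fun _ => exp_pos _) i))
    (mul_le_mul_of_nonneg_left (hmono _ _ (fun _ => exp_pos _) (fun _ => exp_pos _)
      (fun j => exp_le_exp.2 (hxy j)) i) (hd i).le)
  map_add_const x c := by
    have hexp : (fun j => exp ((x + c • 1) j)) = exp c • fun j => exp (x j) := by
      ext j
      simp [exp_add, mul_comm]
    ext i
    change log (d i * f (fun j => exp ((x + c • 1) j)) i) = logConj d f x i + (c • 1 : ι → ℝ) i
    rw [hexp, hhom _ (exp_pos c) _ fun _ => exp_pos _, Pi.smul_apply, smul_eq_mul, mul_left_comm,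
      log_mul (exp_pos c).ne' (mul_pos (hd i) (hpos _ (fun _ => exp_pos _) i)).ne', log_exp]
    simp [logConj, add_comm]

theorem AddMinDominion.multMinDominion {n : ℕ} {d : Fin n → ℝ} {f : (Fin n → ℝ) → Fin n → ℝ}
    (hd : ∀ i, 0 < d i) (hpos : ∀ x, (∀ i, 0 < x i) → ∀ i, 0 < f x i) {I : Set (Fin n)}
    (h : AddMinDominion (logConj d f) I) : MultMinDominion n f I := by
  obtain ⟨hI, C, hC⟩ := h
  refine ⟨hI, ⨆ k, exp C / d k, fun i hi t ht => ?_⟩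
  calc f (fun j => exp (Iᶜ.indicator (fun _ => t) j)) i
      = exp (logConj d f (Iᶜ.indicator fun _ => t) i) / d i := by
        rw [exp_logConj hd hpos, mul_div_cancel_left₀ _ (hd i).ne']
    _ ≤ exp C / d i := div_le_div_of_nonneg_right (exp_le_exp.2 (hC i hi t ht)) (hd i).le
    _ ≤ ⨆ k, exp C / d k := le_ciSup (Finite.bddAbove_range fun k => exp C / d k) i

theorem AddMaxDominion.multMaxDominion {n : ℕ} {d : Fin n → ℝ} {f : (Fin n → ℝ) → Fin n → ℝ}
    (hd : ∀ i, 0 < d i) (hpos : ∀ x, (∀ i, 0 < x i) → ∀ i, 0 < f x i) {J : Set (Fin n)}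
    (h : AddMaxDominion (logConj d f) J) : MultMaxDominion n f J := by
  obtain ⟨hJ, c, hc⟩ := h
  have hle : ∀ j, d j ≤ ⨆ k, d k := le_ciSup (Finite.bddAbove_range d)
  refine ⟨hJ, exp c / ⨆ k, d k, ?_, fun j hj t ht => ?_⟩
  · obtain ⟨j, -⟩ := hJ
    exact div_pos (exp_pos c) ((hd j).trans_le (hle j))
  calc exp c / ⨆ k, d k ≤ exp c / d j := div_le_div_of_nonneg_left (exp_pos c).le (hd j) (hle j)
    _ ≤ exp (logConj d f (Jᶜ.indicator fun _ => -t) j) / d j :=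
        div_le_div_of_nonneg_right (exp_le_exp.2 (hc j hj t ht)) (hd j).le
    _ = f (fun k => exp (Jᶜ.indicator (fun _ => -t) k)) j := by
        rw [exp_logConj hd hpos, mul_div_cancel_left₀ _ (hd j).ne']

end LogConj

section PositiveVector

variable {ι : Type*} [Finite ι] {f : (ι → ℝ) → ι → ℝ}

theorem exists_mem_apply_le_mul_of_bound
    (hmono : ∀ x y, (∀ i, 0 < x i) → (∀ i, 0 < y i) → x ≤ y → f x ≤ f y)
    (hhom : ∀ t : ℝ, 0 < t → ∀ x, (∀ i, 0 < x i) → f (t • x) = t • f x)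
    {I : Set ι} (hI : I.Nonempty) {C : ℝ}
    (hC : ∀ i ∈ I, ∀ t : ℝ, 0 ≤ t → f (fun j => exp (Iᶜ.indicator (fun _ => t) j)) i ≤ C)
    {u : ι → ℝ} (hu : ∀ i, 0 < u i) : ∃ i ∈ I, f u i ≤ C * u i := by
  obtain ⟨i, hiI, hmax⟩ := Set.exists_max_image I u I.toFinite hI
  set t := max 0 (⨆ k, log (u k / u i))
  have hle : (u i)⁻¹ • u ≤ fun j => exp (Iᶜ.indicator (fun _ => t) j) := fun k => by
    change (u i)⁻¹ * u k ≤ exp (Iᶜ.indicator (fun _ => t) k)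
    rw [inv_mul_eq_div]
    by_cases hk : k ∈ I
    · simpa [hk, div_le_one (hu i)] using hmax k hk
    · rw [Set.indicator_of_mem (Set.mem_compl hk), ← exp_log (div_pos (hu k) (hu i))]
      exact exp_le_exp.2 ((le_ciSup (Finite.bddAbove_range fun k => log (u k / u i)) k).trans
        (le_max_right _ _))
  have := hmono ((u i)⁻¹ • u) _ (fun k => mul_pos (inv_pos.2 (hu i)) (hu k)) (fun _ => exp_pos _)
    hle i
  rw [hhom _ (inv_pos.2 (hu i)) u hu, Pi.smul_apply, smul_eq_mul, inv_mul_eq_div] at this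
  exact ⟨i, hiI, (div_le_iff₀ (hu i)).1 (this.trans (hC i hiI t (le_max_left _ _)))⟩

theorem exists_mem_mul_le_apply_of_bound
    (hmono : ∀ x y, (∀ i, 0 < x i) → (∀ i, 0 < y i) → x ≤ y → f x ≤ f y)
    (hhom : ∀ t : ℝ, 0 < t → ∀ x, (∀ i, 0 < x i) → f (t • x) = t • f x)
    {J : Set ι} (hJ : J.Nonempty) {c : ℝ}
    (hc : ∀ j ∈ J, ∀ t : ℝ, 0 ≤ t → c ≤ f (fun k => exp (Jᶜ.indicator (fun _ => -t) k)) j)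
    {u : ι → ℝ} (hu : ∀ i, 0 < u i) : ∃ j ∈ J, c * u j ≤ f u j := by
  obtain ⟨j, hjJ, hmin⟩ := Set.exists_min_image J u J.toFinite hJ
  set t := max 0 (⨆ k, log (u j / u k))
  have hle : (fun k => exp (Jᶜ.indicator (fun _ => -t) k)) ≤ (u j)⁻¹ • u := fun k => by
    change exp (Jᶜ.indicator (fun _ => -t) k) ≤ (u j)⁻¹ * u k
    rw [inv_mul_eq_div]
    by_cases hk : k ∈ J
    · simpa [hk, one_le_div (hu j)] using hmin k hk
    · rw [Set.indicator_of_mem (Set.mem_compl hk), ← exp_log (div_pos (hu k) (hu j)),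
        exp_le_exp, ← inv_div, log_inv, neg_le_neg_iff]
      exact (le_ciSup (Finite.bddAbove_range fun k => log (u j / u k)) k).trans (le_max_right _ _)
  have := hmono _ ((u j)⁻¹ • u) (fun _ => exp_pos _) (fun k => mul_pos (inv_pos.2 (hu j)) (hu k))
    hle j
  rw [hhom _ (inv_pos.2 (hu j)) u hu, Pi.smul_apply, smul_eq_mul, inv_mul_eq_div] at this
  exact ⟨j, hjJ, (le_div_iff₀ (hu j)).1 ((hc j hjJ t (le_max_left _ _)).trans this)⟩

end PositiveVector

theorem exists_scaling_not_eigenvector_of_dominions {n : ℕ} {f : (Fin n → ℝ) → Fin n → ℝ}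
    (hmono : ∀ x y, (∀ i, 0 < x i) → (∀ i, 0 < y i) → x ≤ y → f x ≤ f y)
    (hhom : ∀ t : ℝ, 0 < t → ∀ x, (∀ i, 0 < x i) → f (t • x) = t • f x)
    {I J : Set (Fin n)} (hIJ : Disjoint I J) (hI : MultMinDominion n f I)
    (hJ : MultMaxDominion n f J) :
    ∃ d : Fin n → ℝ, (∀ i, 0 < d i) ∧
      ∀ (lam : ℝ) (u : Fin n → ℝ), (∀ i, 0 < u i) → ¬∀ i, d i * f u i = lam * u i := by
  classical
  obtain ⟨hI, C, hC⟩ := hI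
  obtain ⟨hJ, c, hc, hc'⟩ := hJ
  set ε := c / (2 * (|C| + 1))
  have hε : 0 < ε := by positivity
  refine ⟨fun i => if i ∈ I then ε else 1, fun i => by dsimp only; split_ifs <;> positivity,
    fun lam u hu hlam => ?_⟩
  obtain ⟨i, hiI, hi⟩ := exists_mem_apply_le_mul_of_bound hmono hhom hI hC hu
  obtain ⟨j, hjJ, hj⟩ := exists_mem_mul_le_apply_of_bound hmono hhom hJ hc' hu
  have hcj : c ≤ lam := by
    have := hlam j
    simp only [Set.disjoint_right.1 hIJ hjJ, if_false, one_mul] at this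
    exact le_of_mul_le_mul_right (this ▸ hj) (hu j)
  have hli : lam ≤ ε * C := by
    have := hlam i
    simp only [hiI, if_true] at this
    refine le_of_mul_le_mul_right ?_ (hu i)
    rw [← this, mul_assoc]
    exact mul_le_mul_of_nonneg_left hi hε.le
  have : ε * C < c := calc
    ε * C ≤ ε * |C| := mul_le_mul_of_nonneg_left (le_abs_self C) hε.le
    _ < ε * (2 * (|C| + 1)) := by gcongr; linarith [abs_nonneg C]
    _ = c := div_mul_cancel₀ c (by positivity)
  linarith

theorem stmt17 (n : ℕ) (hn : 1 ≤ n)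
    (f : (Fin n → ℝ) → (Fin n → ℝ))
    (hpos : ∀ x, (∀ i, 0 < x i) → ∀ i, 0 < f x i)
    (hmono : ∀ x y, (∀ i, 0 < x i) → (∀ i, 0 < y i) → x ≤ y → f x ≤ f y)
    (hhom : ∀ t : ℝ, 0 < t → ∀ x, (∀ i, 0 < x i) → f (t • x) = t • f x) :
    (¬ ∃ I J : Set (Fin n),
        Disjoint I J ∧ MultMinDominion n f I ∧ MultMaxDominion n f J) ↔
    (∀ d : Fin n → ℝ, (∀ i, 0 < d i) →
        ∃ lam : ℝ, 0 < lam ∧ ∃ u : Fin n → ℝ, (∀ i, 0 < u i) ∧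
          ∀ i, d i * f u i = lam * u i) := by
  have : Nonempty (Fin n) := ⟨⟨0, hn⟩⟩
  refine ⟨fun hnone d hd => ?_, ?_⟩
  · rcases (isTopical_logConj hd hpos hmono hhom).exists_eigenvector_or_dominions with
      ⟨v, c, hv⟩ | ⟨I, J, hIJ, hI, hJ⟩
    · refine ⟨exp c, exp_pos c, fun i => exp (v i), fun i => exp_pos _, fun i => ?_⟩
      rw [← exp_logConj hd hpos, hv]
      simp [exp_add, mul_comm]
    · exact absurd ⟨I, J, hIJ, hI.multMinDominion hd hpos, hJ.multMaxDominion hd hpos⟩ hnone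
  · rintro heig ⟨I, J, hIJ, hI, hJ⟩
    obtain ⟨d, hd, hnot⟩ := exists_scaling_not_eigenvector_of_dominions hmono hhom hIJ hI hJ
    obtain ⟨lam, -, u, hu, hlam⟩ := heig d hd
    exact hnot lam u hu hlam
end

section
/- Let n ≥ 1, d ≥ 2, and let a be a nonnegative tensor of order d and dimension n, i.e., a family of reals a(i, m) ≥ 0 indexed by i ∈ {1,…,n} and multi-indices m = (i_2,…,i_d) ∈ {1,…,n}^{d−1}, such that for every i there exists m with a(i, m) > 0. Consider the directed graph G on {1,…,n} with an edge from i to j if and only if there exists m with a(i, m) > 0 and j appearing among the entries of m; and let hreach(C), for C ⊆ {1,…,n}, be the smallest set R containing C such that: whenever J ⊆ R, i ∉ J, and every m with a(i, m) > 0 has at least one entry in J, then i ∈ R. Then the following are equivalent: (a) every nonnegative tensor b of the same order and dimension with the same pattern as a (i.e., b(i,m) > 0 if and only if a(i,m) > 0) admits a positive eigenpair, i.e., there exist λ > 0 and u ∈ ℝ_{>0}^n such that Σ_m b(i,m)·u_{i_2}···u_{i_d} = λ·u_i^{d−1} for all i; (b) G has exactly one final class C and hreach(C) = {1,…,n}.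 -/
/-- Edge relation of the digraph associated to a nonnegative tensor `a`:
there is an edge from `i` to `j` iff some multi-index `m` with `a i m > 0`
contains `j` among its entries. -/
def TEdge (n d : ℕ) (a : Fin n → (Fin (d - 1) → Fin n) → ℝ) (i j : Fin n) : Prop :=
  ∃ m : Fin (d - 1) → Fin n, 0 < a i m ∧ ∃ k, m k = j

/-- `C` is a final class of the digraph associated to `a`. -/
def TFinalClass (n d : ℕ) (a : Fin n → (Fin (d - 1) → Fin n) → ℝ)
    (C : Set (Fin n)) : Prop :=
  C.Nonempty ∧ (∀ i ∈ C, ∀ j, TEdge n d a i j → j ∈ C) ∧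
    (∀ i ∈ C, ∀ j ∈ C, Relation.ReflTransGen (TEdge n d a) i j)

/-- `R` is closed for hypergraph reachability: whenever `J ⊆ R`, `i ∉ J`,
and every `m` with `a i m > 0` has at least one entry in `J`, then `i ∈ R`. -/
def TClosed (n d : ℕ) (a : Fin n → (Fin (d - 1) → Fin n) → ℝ)
    (R : Set (Fin n)) : Prop :=
  ∀ (J : Set (Fin n)) (i : Fin n), J ⊆ R → i ∉ J →
    (∀ m : Fin (d - 1) → Fin n, 0 < a i m → ∃ k, m k ∈ J) → i ∈ R

/-- `hreach(C)`: the smallest set containing `C` closed for hypergraph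
reachability. -/
def TReach (n d : ℕ) (a : Fin n → (Fin (d - 1) → Fin n) → ℝ)
    (C : Set (Fin n)) : Set (Fin n) :=
  ⋂₀ {R | C ⊆ R ∧ TClosed n d a R}

open Finset Set Relation


/-- the multilinear map associated to a tensor -/
noncomputable def TF (n d : ℕ) (b : Fin n → (Fin (d - 1) → Fin n) → ℝ)
    (x : Fin n → ℝ) (i : Fin n) : ℝ :=
  ∑ m : Fin (d - 1) → Fin n, b i m * ∏ k, x (m k)

/-- the "all ones" part -/
noncomputable def TE (n d : ℕ) (x : Fin n → ℝ) (i : Fin n) : ℝ :=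
  ∑ m : Fin (d - 1) → Fin n, ∏ k, x (m k)

section basic

variable {n d : ℕ}

lemma prod_nonneg' {x : Fin n → ℝ} (hx : ∀ i, 0 ≤ x i) (m : Fin (d-1) → Fin n) :
    0 ≤ ∏ k, x (m k) := Finset.prod_nonneg fun k _ => hx (m k)

lemma TF_nonneg {b : Fin n → (Fin (d - 1) → Fin n) → ℝ} (hb : ∀ i m, 0 ≤ b i m)
    {x : Fin n → ℝ} (hx : ∀ i, 0 ≤ x i) (i : Fin n) : 0 ≤ TF n d b x i :=
  Finset.sum_nonneg fun m _ => mul_nonneg (hb i m) (prod_nonneg' hx m)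

lemma TE_nonneg {x : Fin n → ℝ} (hx : ∀ i, 0 ≤ x i) (i : Fin n) : 0 ≤ TE n d x i :=
  Finset.sum_nonneg fun m _ => prod_nonneg' hx m

lemma term_le_TF {b : Fin n → (Fin (d - 1) → Fin n) → ℝ} (hb : ∀ i m, 0 ≤ b i m)
    {x : Fin n → ℝ} (hx : ∀ i, 0 ≤ x i) (i : Fin n) (m : Fin (d-1) → Fin n) :
    b i m * ∏ k, x (m k) ≤ TF n d b x i :=
  Finset.single_le_sum (f := fun m => b i m * ∏ k, x (m k))
    (fun m _ => mul_nonneg (hb i m) (prod_nonneg' hx m)) (Finset.mem_univ m)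

lemma TF_mono {b : Fin n → (Fin n → ℝ) → ℝ} : True := trivial

lemma TF_le_TF {b : Fin n → (Fin (d - 1) → Fin n) → ℝ} (hb : ∀ i m, 0 ≤ b i m)
    {x y : Fin n → ℝ} (hx : ∀ i, 0 ≤ x i) (hxy : ∀ i, x i ≤ y i) (i : Fin n) :
    TF n d b x i ≤ TF n d b y i := by
  refine Finset.sum_le_sum fun m _ => ?_
  refine mul_le_mul_of_nonneg_left ?_ (hb i m)
  exact Finset.prod_le_prod (fun k _ => hx (m k)) (fun k _ => hxy (m k))

lemma card_fin_d : 2 ≤ d → Fintype.card (Fin (d-1)) = d - 1 := fun _ => Fintype.card_fin _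

lemma TF_smul (hd : 2 ≤ d) {b : Fin n → (Fin (d - 1) → Fin n) → ℝ}
    (c : ℝ) (x : Fin n → ℝ) (i : Fin n) :
    TF n d b (fun j => c * x j) i = c ^ (d-1) * TF n d b x i := by
  unfold TF
  rw [Finset.mul_sum]
  refine Finset.sum_congr rfl fun m _ => ?_
  rw [Finset.prod_mul_distrib, Finset.prod_const, Finset.card_univ, Fintype.card_fin]
  ring

lemma TF_add_eps (hd : 2 ≤ d) {b : Fin n → (Fin (d - 1) → Fin n) → ℝ} (ε : ℝ)
    (x : Fin n → ℝ) (i : Fin n) :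
    TF n d (fun i m => b i m + ε) x i = TF n d b x i + ε * TE n d x i := by
  unfold TF TE
  rw [Finset.mul_sum, ← Finset.sum_add_distrib]
  exact Finset.sum_congr rfl fun m _ => by ring

/-- product lower bound: one designated factor times a lower bound on the rest -/
lemma prod_ge_factor (hd : 2 ≤ d) {x : Fin n → ℝ} {m : Fin (d-1) → Fin n}
    {c : ℝ} (hc : 0 ≤ c) (k0 : Fin (d-1)) (h : ∀ k, c ≤ x (m k)) :
    x (m k0) * c ^ (d - 2) ≤ ∏ k, x (m k) := by
  rw [← Finset.mul_prod_erase univ _ (Finset.mem_univ k0)]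
  refine mul_le_mul_of_nonneg_left ?_ (le_trans hc (h k0))
  calc c ^ (d-2) = ∏ _k ∈ univ.erase k0, c := by
        rw [Finset.prod_const, Finset.card_erase_of_mem (Finset.mem_univ k0),
          Finset.card_univ, Fintype.card_fin]
        congr 1
      _ ≤ ∏ k ∈ univ.erase k0, x (m k) :=
        Finset.prod_le_prod (fun _ _ => hc) (fun k _ => h k)

/-- product upper bound by a single factor when all entries are ≤ 1 -/
lemma prod_le_factor {x : Fin n → ℝ} {m : Fin (d-1) → Fin n}
    (hx : ∀ i, 0 ≤ x i) (hx1 : ∀ i, x i ≤ 1) (k0 : Fin (d-1)) :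
    ∏ k, x (m k) ≤ x (m k0) := by
  rw [← Finset.mul_prod_erase univ _ (Finset.mem_univ k0)]
  calc x (m k0) * ∏ k ∈ univ.erase k0, x (m k)
      ≤ x (m k0) * 1 := by
        refine mul_le_mul_of_nonneg_left ?_ (hx _)
        exact Finset.prod_le_one (fun k _ => hx (m k)) (fun k _ => hx1 (m k))
    _ = x (m k0) := mul_one _

lemma prod_le_one' {x : Fin n → ℝ} (hx : ∀ i, 0 ≤ x i) (hx1 : ∀ i, x i ≤ 1)
    (m : Fin (d-1) → Fin n) : ∏ k, x (m k) ≤ 1 :=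
  Finset.prod_le_one (fun k _ => hx (m k)) (fun k _ => hx1 (m k))

lemma prod_ge_const {x : Fin n → ℝ} {c : ℝ} (hc : 0 ≤ c) (h : ∀ i, c ≤ x i)
    (hd : 2 ≤ d) (m : Fin (d-1) → Fin n) : c ^ (d-1) ≤ ∏ k, x (m k) := by
  calc c ^ (d-1) = ∏ _k : Fin (d-1), c := by
        rw [Finset.prod_const, Finset.card_univ, Fintype.card_fin]
      _ ≤ ∏ k, x (m k) := Finset.prod_le_prod (fun _ _ => hc) (fun k _ => h (m k))

lemma prod_ge_const' {x : Fin n → ℝ} {c : ℝ} {m : Fin (d-1) → Fin n} (hc : 0 ≤ c)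
    (h : ∀ k, c ≤ x (m k)) (hd : 2 ≤ d) : c ^ (d-1) ≤ ∏ k, x (m k) := by
  calc c ^ (d-1) = ∏ _k : Fin (d-1), c := by
        rw [Finset.prod_const, Finset.card_univ, Fintype.card_fin]
      _ ≤ ∏ k, x (m k) := Finset.prod_le_prod (fun _ _ => hc) (fun k _ => h k)

lemma prod_le_const {x : Fin n → ℝ} {c : ℝ} (h0 : ∀ i, 0 ≤ x i) (h : ∀ i, x i ≤ c)
    (hd : 2 ≤ d) (m : Fin (d-1) → Fin n) : ∏ k, x (m k) ≤ c ^ (d-1) := by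
  calc ∏ k, x (m k) ≤ ∏ _k : Fin (d-1), c :=
        Finset.prod_le_prod (fun k _ => h0 (m k)) (fun k _ => h (m k))
      _ = c ^ (d-1) := by rw [Finset.prod_const, Finset.card_univ, Fintype.card_fin]

lemma continuous_TF (b : Fin n → (Fin (d - 1) → Fin n) → ℝ) (i : Fin n) :
    Continuous fun x : Fin n → ℝ => TF n d b x i := by
  unfold TF
  exact continuous_finset_sum _ fun m _ =>
    (continuous_const.mul (continuous_finset_prod _ fun k _ => continuous_apply (m k)))

lemma continuous_TE (i : Fin n) :
    Continuous fun x : Fin n → ℝ => TE n d x i := by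
  unfold TE
  exact continuous_finset_sum _ fun m _ =>
    continuous_finset_prod _ fun k _ => continuous_apply (m k)

lemma TE_le (hn : 1 ≤ n) {x : Fin n → ℝ} (hx : ∀ i, 0 ≤ x i) (hx1 : ∀ i, x i ≤ 1)
    (hd : 2 ≤ d) (i : Fin n) : TE n d x i ≤ (n : ℝ) ^ (d-1) := by
  have : TE n d x i ≤ ∑ _m : Fin (d-1) → Fin n, (1:ℝ) :=
    Finset.sum_le_sum fun m _ => prod_le_one' hx hx1 m
  calc TE n d x i ≤ ∑ _m : Fin (d-1) → Fin n, (1:ℝ) := this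
    _ = ((n:ℝ))^(d-1) := by
        rw [Finset.sum_const, Finset.card_univ, nsmul_eq_mul, mul_one]
        norm_num [Fintype.card_fun]

lemma inf'_set_congr {S T : Set (Fin n)} (h : S = T)
    (hS : ((Set.toFinite S).toFinset).Nonempty) (hT : ((Set.toFinite T).toFinset).Nonempty)
    (x : Fin n → ℝ) :
    ((Set.toFinite S).toFinset).inf' hS x = ((Set.toFinite T).toFinset).inf' hT x := by
  subst h; rfl

lemma univ_nonempty' (hn : 1 ≤ n) : (Finset.univ : Finset (Fin n)).Nonempty :=
  ⟨⟨0, hn⟩, Finset.mem_univ _⟩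

end basic

section graph
variable {n d : ℕ} (a : Fin n → (Fin (d - 1) → Fin n) → ℝ)

/-- vertices reachable from v -/
def Dset (v : Fin n) : Set (Fin n) := {j | ReflTransGen (TEdge n d a) v j}

lemma Dset_self (v : Fin n) : v ∈ Dset a v := ReflTransGen.refl

lemma Dset_trans {v w : Fin n} (h : w ∈ Dset a v) : Dset a w ⊆ Dset a v :=
  fun _ hj => ReflTransGen.trans h hj

lemma reach_mem_final {C : Set (Fin n)} (hC : TFinalClass n d a C) {u w : Fin n}
    (hu : u ∈ C) (h : ReflTransGen (TEdge n d a) u w) : w ∈ C := by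
  induction h with
  | refl => exact hu
  | tail _ e ih => exact hC.2.1 _ ih _ e

/-- every vertex can reach some final class -/
lemma exists_finalClass_reachable (hn : 1 ≤ n) (v : Fin n) :
    ∃ C : Set (Fin n), TFinalClass n d a C ∧ C ⊆ Dset a v := by
  classical
  obtain ⟨u, hu, hmin⟩ := Finset.exists_min_image
    (Set.toFinset (Dset a v)) (fun w => (Dset a w).ncard)
    ⟨v, by simp [Dset_self]⟩
  rw [Set.mem_toFinset] at hu
  have key : ∀ w ∈ Dset a u, Dset a w = Dset a u := by
    intro w hw
    have hsub : Dset a w ⊆ Dset a u := Dset_trans a hw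
    have hwv : w ∈ Dset a v := Dset_trans a hu hw
    have hcard : (Dset a u).ncard ≤ (Dset a w).ncard := by
      have := hmin w (by rwa [Set.mem_toFinset])
      exact this
    have hfin : (Dset a u).Finite := Set.toFinite _
    exact Set.eq_of_subset_of_ncard_le hsub hcard hfin
  refine ⟨Dset a u, ⟨⟨u, Dset_self a u⟩, ?_, ?_⟩, Dset_trans a hu⟩
  · intro i hi j hij
    exact ReflTransGen.tail hi hij
  · intro i hi j hj
    have : j ∈ Dset a i := by rw [key i hi]; exact hj
    exact this

/-- two final classes that intersect are equal -/
lemma finalClass_eq_of_inter {C C' : Set (Fin n)} (hC : TFinalClass n d a C)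
    (hC' : TFinalClass n d a C') {z : Fin n} (hz : z ∈ C) (hz' : z ∈ C') : C = C' := by
  apply Set.eq_of_subset_of_subset
  · intro y hy
    exact reach_mem_final a hC' hz' (hC.2.2 z hz y hy)
  · intro y hy
    exact reach_mem_final a hC hz (hC'.2.2 z hz' y hy)

/-- the reach operator -/
def Phi (R : Set (Fin n)) : Set (Fin n) :=
  R ∪ {i | ∀ m, 0 < a i m → ∃ k, m k ∈ R}

lemma Phi_mono_incl (R : Set (Fin n)) : R ⊆ Phi a R := Set.subset_union_left

lemma TClosed_of_phi_fixed {R : Set (Fin n)} (h : Phi a R = R) : TClosed n d a R := by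
  intro J i hJ _ hall
  have : i ∈ Phi a R := Or.inr (fun m hm => (hall m hm).imp fun k hk => hJ hk)
  rwa [h] at this

lemma TReach_subset {C R : Set (Fin n)} (hCR : C ⊆ R) (hR : TClosed n d a R) :
    TReach n d a C ⊆ R := Set.sInter_subset_of_mem ⟨hCR, hR⟩

lemma TReach_self {C : Set (Fin n)} : C ⊆ TReach n d a C :=
  Set.subset_sInter fun _ hR => hR.1

lemma TClosed_TReach (C : Set (Fin n)) : TClosed n d a (TReach n d a C) := by
  intro J i hJ hiJ hall
  refine Set.mem_sInter.2 fun R hR => ?_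
  by_cases hi : i ∈ J
  · exact absurd hi hiJ
  · refine hR.2 J i (fun j hj => (Set.mem_sInter.1 (hJ hj)) R hR) hi hall

/-- reach layers -/
lemma layers (C : Set (Fin n)) (hCne : C.Nonempty)
    (hfull : TReach n d a C = Set.univ) :
    (Phi a)^[n] C = Set.univ := by
  classical
  set R : ℕ → Set (Fin n) := fun t => (Phi a)^[t] C with hR
  have hmono : ∀ t, R t ⊆ R (t+1) := by
    intro t
    have : R (t+1) = Phi a (R t) := Function.iterate_succ_apply' _ _ _
    rw [this]; exact Phi_mono_incl a _
  have hCsub : ∀ t, C ⊆ R t := by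
    intro t
    induction t with
    | zero => exact subset_rfl
    | succ t ih => exact fun c hc => hmono t (ih hc)
  have hfix : ∀ t, Phi a (R t) = R t → R t = Set.univ := by
    intro t hfixt
    have h1 : TReach n d a C ⊆ R t :=
      TReach_subset a (hCsub t) (TClosed_of_phi_fixed a hfixt)
    rw [hfull] at h1
    exact Set.eq_univ_of_univ_subset h1
  by_cases hstab : ∃ t < n, Phi a (R t) = R t
  · obtain ⟨t, htn, hfixt⟩ := hstab
    have h1 := hfix t hfixt
    have hmono2 : ∀ s t : ℕ, t ≤ s → R t ⊆ R s := by
      intro s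
      induction s with
      | zero => intro t ht; interval_cases t; exact subset_rfl
      | succ s ih =>
        intro t ht
        rcases Nat.lt_or_ge t (s+1) with h | h
        · exact fun y hy => hmono s (ih t (by omega) hy)
        · have : t = s + 1 := by omega
          subst this; exact subset_rfl
    have : R t ⊆ R n := hmono2 n t (by omega)
    rw [h1] at this
    exact Set.eq_univ_of_univ_subset this
  · push_neg at hstab
    exfalso
    have hgrow : ∀ t < n, (R t).ncard + 1 ≤ (R (t+1)).ncard := by
      intro t htn
      have hne : R t ≠ R (t+1) := by
        intro h
        have hsucc : R (t+1) = Phi a (R t) := Function.iterate_succ_apply' _ _ _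
        exact hstab t htn (by rw [← hsucc, ← h])
      have hss : R t ⊂ R (t+1) := ssubset_of_subset_of_ne (hmono t) hne
      have := Set.ncard_lt_ncard hss (Set.toFinite _)
      omega
    have hcard : ∀ t ≤ n, t + 1 ≤ (R t).ncard := by
      intro t htn
      induction t with
      | zero =>
        have : 0 < (R 0).ncard := by
          rw [Set.ncard_pos (Set.toFinite _)]
          exact hCne
        omega
      | succ t ih =>
        have h1 := ih (by omega)
        have h2 := hgrow t (by omega)
        omega
    have h1 := hcard n le_rfl
    have h2 : (R n).ncard ≤ n := by
      have := Set.ncard_le_ncard (Set.subset_univ (R n)) (Set.toFinite _)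
      rwa [Set.ncard_univ, Nat.card_eq_fintype_card, Fintype.card_fin] at this
    omega

lemma layer_step (t : ℕ) {i : Fin n} (C : Set (Fin n))
    (h : i ∈ (Phi a)^[t+1] C) :
    i ∈ (Phi a)^[t] C ∨ ∀ m, 0 < a i m → ∃ k, m k ∈ (Phi a)^[t] C := by
  rw [Function.iterate_succ_apply'] at h
  exact h

end graph

section chain
variable {n d : ℕ}

lemma edge_step (hd : 2 ≤ d) (a b : Fin n → (Fin (d-1) → Fin n) → ℝ)
    (hb : ∀ i m, 0 ≤ b i m) {C : Set (Fin n)} (hC : TFinalClass n d a C)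
    (hCfne : ((Set.toFinite C).toFinset).Nonempty)
    {u w : Fin n} (hu : u ∈ C) (he : TEdge n d a u w)
    {B' bmin : ℝ} (hbmin : 0 < bmin) (hblow : ∀ i m, 0 < a i m → bmin ≤ b i m)
    (x : Fin n → ℝ) (lam : ℝ) (hx0 : ∀ i, 0 < x i) (hx1 : ∀ i, x i ≤ 1)
    (hlam : lam ≤ B')
    (hsup : ∀ i, TF n d b x i ≤ lam * x i ^ (d-1)) :
    bmin * (x w * (((Set.toFinite C).toFinset).inf' hCfne x) ^ (d-2)) ≤ B' * x u ^ (d-1) := by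
  obtain ⟨m, hma, k0, hk0⟩ := he
  set μc := ((Set.toFinite C).toFinset).inf' hCfne x with hμc
  have hmem : ∀ k, m k ∈ C := fun k => hC.2.1 u hu (m k) ⟨m, hma, k, rfl⟩
  have hμc_pos : 0 < μc := by
    rw [hμc, Finset.lt_inf'_iff]
    exact fun i _ => hx0 i
  have hle : ∀ k, μc ≤ x (m k) := fun k =>
    Finset.inf'_le x ((Set.Finite.mem_toFinset _).2 (hmem k))
  have hprod : x (m k0) * μc ^ (d-2) ≤ ∏ k, x (m k) :=
    prod_ge_factor hd hμc_pos.le k0 hle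
  have h1 : bmin * (x w * μc ^ (d-2)) ≤ b u m * ∏ k, x (m k) := by
    rw [← hk0]
    have h2 : bmin * (x (m k0) * μc ^ (d-2)) ≤ bmin * ∏ k, x (m k) :=
      mul_le_mul_of_nonneg_left hprod hbmin.le
    have h3 : bmin * ∏ k, x (m k) ≤ b u m * ∏ k, x (m k) :=
      mul_le_mul_of_nonneg_right (hblow u m hma) (prod_nonneg' (fun i => (hx0 i).le) m)
    linarith
  have h2 := term_le_TF hb (fun i => (hx0 i).le) u m
  have h3 := hsup u
  have h4 : lam * x u ^ (d-1) ≤ B' * x u ^ (d-1) :=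
    mul_le_mul_of_nonneg_right hlam (pow_nonneg (hx0 u).le _)
  linarith

lemma chainC (hd : 2 ≤ d) (a b : Fin n → (Fin (d-1) → Fin n) → ℝ)
    (hb : ∀ i m, 0 ≤ b i m) {C : Set (Fin n)} (hC : TFinalClass n d a C)
    (hCfne : ((Set.toFinite C).toFinset).Nonempty)
    {B' bmin : ℝ} (hbmin : 0 < bmin) (hB' : 0 < B')
    (hblow : ∀ i m, 0 < a i m → bmin ≤ b i m)
    {u w : Fin n} (hu : u ∈ C) (hr : Relation.ReflTransGen (TEdge n d a) u w) :
    ∃ κ : ℝ, 0 < κ ∧ ∃ A : ℕ, ∀ (x : Fin n → ℝ) (lam : ℝ),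
      (∀ i, 0 < x i) → (∀ i, x i ≤ 1) → lam ≤ B' →
      (∀ i, TF n d b x i ≤ lam * x i ^ (d-1)) →
      x w * (((Set.toFinite C).toFinset).inf' hCfne x) ^ A ≤ κ * x u ^ (A+1) := by
  induction hr with
  | refl =>
    refine ⟨1, one_pos, 0, fun x lam hx0 hx1 hlam hsup => ?_⟩
    simp
  | @tail w' w hc he ih =>
    obtain ⟨κ, hκ, A, hP⟩ := ih
    have hw' : w' ∈ C := reach_mem_final a hC hu hc
    refine ⟨(B'/bmin) * κ^(d-1), by positivity, (d-2) + A*(d-1), fun x lam hx0 hx1 hlam hsup => ?_⟩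
    set μc := ((Set.toFinite C).toFinset).inf' hCfne x with hμc
    have hμc_pos : 0 < μc := by
      rw [hμc, Finset.lt_inf'_iff]; exact fun i _ => hx0 i
    have hstep := edge_step hd a b hb hC hCfne hw' he hbmin hblow x lam hx0 hx1 hlam hsup
    rw [← hμc] at hstep
    have hstep' : x w * μc ^ (d-2) ≤ (B'/bmin) * x w' ^ (d-1) := by
      rw [div_mul_eq_mul_div, le_div_iff₀ hbmin]
      nlinarith [hstep]
    have hih := hP x lam hx0 hx1 hlam hsup
    rw [← hμc] at hih
    have hih' : (x w' * μc ^ A) ^ (d-1) ≤ (κ * x u ^ (A+1)) ^ (d-1) :=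
      pow_le_pow_left₀ (mul_nonneg (hx0 w').le (pow_nonneg hμc_pos.le _)) hih _
    have hexp : (d-2) + A*(d-1) + 1 = (A+1)*(d-1) := by
      obtain ⟨e, rfl⟩ : ∃ e, d = e + 2 := ⟨d - 2, by omega⟩
      have h1 : e + 2 - 1 = e + 1 := by omega
      have h2 : e + 2 - 2 = e := by omega
      rw [h1, h2]; ring
    calc x w * μc ^ ((d-2) + A*(d-1))
        = (x w * μc ^ (d-2)) * μc ^ (A*(d-1)) := by rw [pow_add]; ring
      _ ≤ ((B'/bmin) * x w' ^ (d-1)) * μc ^ (A*(d-1)) :=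
          mul_le_mul_of_nonneg_right hstep' (pow_nonneg hμc_pos.le _)
      _ = (B'/bmin) * ((x w' * μc ^ A) ^ (d-1)) := by
          rw [mul_pow, ← pow_mul]; ring
      _ ≤ (B'/bmin) * ((κ * x u ^ (A+1)) ^ (d-1)) :=
          mul_le_mul_of_nonneg_left hih' (by positivity)
      _ = (B'/bmin) * κ^(d-1) * x u ^ ((d-2) + A*(d-1) + 1) := by
          rw [mul_pow, ← pow_mul, hexp]; ring
      _ = (B'/bmin) * κ^(d-1) * x u ^ ((d-2) + A*(d-1)+1) := by ring

lemma chainC_all (hn : 1 ≤ n) (hd : 2 ≤ d) (a b : Fin n → (Fin (d-1) → Fin n) → ℝ)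
    (hb : ∀ i m, 0 ≤ b i m) {C : Set (Fin n)} (hC : TFinalClass n d a C)
    (hCfne : ((Set.toFinite C).toFinset).Nonempty)
    {B' bmin : ℝ} (hbmin : 0 < bmin) (hB' : 0 < B')
    (hblow : ∀ i m, 0 < a i m → bmin ≤ b i m) :
    ∃ κC : ℝ, 0 < κC ∧ ∀ (x : Fin n → ℝ) (lam : ℝ),
      (∀ i, 0 < x i) → (∀ i, x i ≤ 1) → lam ≤ B' →
      (∀ i, TF n d b x i ≤ lam * x i ^ (d-1)) →
      ∀ w ∈ C, x w ≤ κC * (((Set.toFinite C).toFinset).inf' hCfne x) := by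
  classical
  have hpair : ∀ u w : Fin n, ∃ κ : ℝ, 0 < κ ∧ (u ∈ C → w ∈ C →
      ∀ (x : Fin n → ℝ) (lam : ℝ),
      (∀ i, 0 < x i) → (∀ i, x i ≤ 1) → lam ≤ B' →
      (∀ i, TF n d b x i ≤ lam * x i ^ (d-1)) →
      x u = (((Set.toFinite C).toFinset).inf' hCfne x) →
      x w ≤ κ * (((Set.toFinite C).toFinset).inf' hCfne x)) := by
    intro u w
    by_cases h : u ∈ C ∧ w ∈ C
    · obtain ⟨κ, hκ, A, hP⟩ := chainC hd a b hb hC hCfne hbmin hB' hblow h.1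
        (hC.2.2 u h.1 w h.2)
      refine ⟨κ, hκ, fun _ _ x lam hx0 hx1 hlam hsup hxu => ?_⟩
      have := hP x lam hx0 hx1 hlam hsup
      set μc := ((Set.toFinite C).toFinset).inf' hCfne x with hμc
      have hμc_pos : 0 < μc := by
        rw [hμc, Finset.lt_inf'_iff]; exact fun i _ => hx0 i
      rw [hxu] at this
      have hpow : μc ^ (A+1) = (κ * μc) * μc^A / κ * κ / κ := by
        field_simp; ring
      have h2 : x w * μc ^ A ≤ (κ * μc) * μc ^ A := by
        calc x w * μc ^ A ≤ κ * μc ^ (A+1) := this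
          _ = (κ * μc) * μc ^ A := by rw [pow_succ]; ring
      exact le_of_mul_le_mul_right h2 (pow_pos hμc_pos A)
    · exact ⟨1, one_pos, fun hu hw => absurd ⟨hu, hw⟩ h⟩
  choose κf hκf using hpair
  refine ⟨∑ u, ∑ w, κf u w, ?_, ?_⟩
  · exact Finset.sum_pos (fun u _ => Finset.sum_pos (fun w _ => (hκf u w).1)
      (univ_nonempty' hn)) (univ_nonempty' hn)
  · intro x lam hx0 hx1 hlam hsup w hw
    obtain ⟨u, hu, hxu⟩ := Finset.exists_mem_eq_inf' hCfne x
    have huC : u ∈ C := (Set.Finite.mem_toFinset _).1 hu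
    have h1 := (hκf u w).2 huC hw x lam hx0 hx1 hlam hsup hxu.symm
    have hμc_pos : 0 < ((Set.toFinite C).toFinset).inf' hCfne x := by
      rw [Finset.lt_inf'_iff]; exact fun i _ => hx0 i
    refine le_trans h1 (mul_le_mul_of_nonneg_right ?_ hμc_pos.le)
    calc κf u w ≤ ∑ w', κf u w' :=
          Finset.single_le_sum (fun w' _ => (hκf u w').1.le) (Finset.mem_univ w)
      _ ≤ ∑ u', ∑ w', κf u' w' :=
          Finset.single_le_sum (fun u' _ => Finset.sum_nonneg fun w' _ => (hκf u' w').1.le)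
            (Finset.mem_univ u)

end chain

section keybounds
variable {n d : ℕ}

lemma super_eigen (hd : 2 ≤ d) {b : Fin n → (Fin (d-1) → Fin n) → ℝ} {ε lam : ℝ}
    {x : Fin n → ℝ} (hx0 : ∀ i, 0 ≤ x i) (hε : 0 ≤ ε)
    (heig : ∀ i, TF n d (fun i m => b i m + ε) x i = lam * x i ^ (d-1)) :
    ∀ i, TF n d b x i ≤ lam * x i ^ (d-1) := by
  intro i
  have h := heig i
  rw [TF_add_eps hd] at h
  have hTE : 0 ≤ ε * TE n d x i := mul_nonneg hε (TE_nonneg hx0 i)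
  linarith

lemma TF_le_rowsum_mul (hd : 2 ≤ d) {b : Fin n → (Fin (d-1) → Fin n) → ℝ}
    (hb : ∀ i m, 0 ≤ b i m) {x : Fin n → ℝ} (hx0 : ∀ i, 0 ≤ x i) (hx1 : ∀ i, x i ≤ 1)
    {M : ℝ} (hM : 0 ≤ M) (i : Fin n)
    (hhit : ∀ m, 0 < b i m → ∏ k, x (m k) ≤ M) :
    TF n d b x i ≤ (∑ m, b i m) * M := by
  unfold TF
  rw [Finset.sum_mul]
  refine Finset.sum_le_sum fun m _ => ?_
  rcases lt_or_eq_of_le (hb i m) with h | h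
  · exact mul_le_mul_of_nonneg_left (hhit m h) (hb i m)
  · rw [← h]; simp

lemma lam_le_B (hn : 1 ≤ n) (hd : 2 ≤ d) {b : Fin n → (Fin (d-1) → Fin n) → ℝ}
    (hb : ∀ i m, 0 ≤ b i m) {ε lam : ℝ} {x : Fin n → ℝ}
    (hx0 : ∀ i, 0 ≤ x i) (hx1 : ∀ i, x i ≤ 1) (hxtop : ∃ i, x i = 1)
    (hε : 0 < ε) (hε1 : ε ≤ 1)
    (heig : ∀ i, TF n d (fun i m => b i m + ε) x i = lam * x i ^ (d-1)) :
    lam ≤ (univ.sup' (univ_nonempty' hn) (fun i => ∑ m, b i m)) + (n:ℝ) ^ (d-1) := by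
  obtain ⟨i1, hi1⟩ := hxtop
  have h := heig i1
  rw [hi1, one_pow, mul_one] at h
  have h2 : TF n d (fun i m => b i m + ε) x i1 ≤ (∑ m, b i1 m) + ε * (n:ℝ)^(d-1) := by
    rw [TF_add_eps hd]
    have hTF : TF n d b x i1 ≤ (∑ m, b i1 m) * 1 :=
      TF_le_rowsum_mul hd hb hx0 hx1 zero_le_one i1 (fun m _ => prod_le_one' hx0 hx1 m)
    have hTE : TE n d x i1 ≤ (n:ℝ)^(d-1) := TE_le hn hx0 hx1 hd i1
    have := mul_le_mul_of_nonneg_left hTE hε.le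
    rw [mul_one] at hTF
    linarith
  have h3 : (∑ m, b i1 m) ≤ univ.sup' (univ_nonempty' hn) (fun i => ∑ m, b i m) :=
    Finset.le_sup' (fun i => ∑ m, b i m) (Finset.mem_univ i1)
  have h4 : ε * (n:ℝ)^(d-1) ≤ (n:ℝ)^(d-1) := by
    have hnn : (0:ℝ) ≤ (n:ℝ)^(d-1) := by positivity
    nlinarith
  linarith [h.symm.le.trans h2]

lemma lam_ge_r (hn : 1 ≤ n) (hd : 2 ≤ d) {b : Fin n → (Fin (d-1) → Fin n) → ℝ}
    (hb : ∀ i m, 0 ≤ b i m) {ε lam : ℝ} {x : Fin n → ℝ}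
    (hx0 : ∀ i, 0 < x i) (hx1 : ∀ i, x i ≤ 1)
    (hε : 0 ≤ ε)
    (heig : ∀ i, TF n d (fun i m => b i m + ε) x i = lam * x i ^ (d-1)) :
    (univ.inf' (univ_nonempty' hn) (fun i => ∑ m, b i m)) ≤ lam := by
  obtain ⟨i0, _, hi0⟩ := Finset.exists_mem_eq_inf' (univ_nonempty' hn) x
  set μ := x i0 with hμ
  have hμpos : 0 < μ := hx0 i0
  have hsuper := super_eigen hd (fun i => (hx0 i).le) hε heig
  have h1 : TF n d b (fun _ => (1:ℝ)) i0 = ∑ m, b i0 m := by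
    unfold TF
    refine Finset.sum_congr rfl fun m _ => ?_
    rw [Finset.prod_const, one_pow, mul_one]
  have h2 : TF n d b (fun _ => (1:ℝ)) i0 ≤ TF n d b (fun j => μ⁻¹ * x j) i0 := by
    refine TF_le_TF hb (fun _ => zero_le_one) (fun j => ?_) i0
    rw [le_inv_mul_iff₀ hμpos, mul_one, ← hi0]
    exact Finset.inf'_le x (Finset.mem_univ j)
  have h3 : TF n d b (fun j => μ⁻¹ * x j) i0 = (μ⁻¹)^(d-1) * TF n d b x i0 :=
    TF_smul hd μ⁻¹ x i0
  have h4 : TF n d b x i0 ≤ lam * μ ^ (d-1) := hsuper i0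
  have h5 : (μ⁻¹)^(d-1) * TF n d b x i0 ≤ (μ⁻¹)^(d-1) * (lam * μ^(d-1)) :=
    mul_le_mul_of_nonneg_left h4 (by positivity)
  have h6 : (μ⁻¹)^(d-1) * (lam * μ^(d-1)) = lam := by
    rw [← mul_assoc, mul_comm ((μ⁻¹)^(d-1)) lam, mul_assoc, ← mul_pow,
      inv_mul_cancel₀ (ne_of_gt hμpos), one_pow, mul_one]
  have h7 := Finset.inf'_le (fun i => ∑ m, b i m) (Finset.mem_univ i0)
  calc univ.inf' (univ_nonempty' hn) (fun i => ∑ m, b i m) ≤ ∑ m, b i0 m := h7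
    _ ≤ lam := by rw [← h1]; linarith

end keybounds

section poscase
variable {n d : ℕ}

/-- gain lemma : increasing the vector gains at least the gain of one designated term -/
lemma TF_gain (p : Fin n → (Fin (d - 1) → Fin n) → ℝ) (hp : ∀ i m, 0 ≤ p i m)
    {x y : Fin n → ℝ} (hx : ∀ i, 0 ≤ x i) (hxy : ∀ i, x i ≤ y i) (i : Fin n)
    (m0 : Fin (d-1) → Fin n) :
    TF n d p x i + p i m0 * (∏ k, y (m0 k) - ∏ k, x (m0 k)) ≤ TF n d p y i := by
  unfold TF
  rw [← Finset.add_sum_erase _ _ (Finset.mem_univ m0),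
    ← Finset.add_sum_erase _ (fun m => p i m * ∏ k, y (m k)) (Finset.mem_univ m0)]
  have hsum : ∑ m ∈ univ.erase m0, p i m * ∏ k, x (m k)
      ≤ ∑ m ∈ univ.erase m0, p i m * ∏ k, y (m k) := by
    refine Finset.sum_le_sum fun m _ => ?_
    exact mul_le_mul_of_nonneg_left
      (Finset.prod_le_prod (fun k _ => hx (m k)) (fun k _ => hxy (m k))) (hp i m)
  nlinarith [hsum]

lemma feas_le_Bp (hn : 1 ≤ n) (hd : 2 ≤ d) (p : Fin n → (Fin (d - 1) → Fin n) → ℝ)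
    (hp : ∀ i m, 0 ≤ p i m) {x : Fin n → ℝ} (hx0 : ∀ i, 0 ≤ x i) (hx1 : ∀ i, x i ≤ 1)
    {itop : Fin n} (htop : x itop = 1) {μ : ℝ} {Bp : ℝ}
    (hBple : ∀ i, (∑ m, p i m) ≤ Bp)
    (hfeas : μ * x itop ^ (d-1) ≤ TF n d p x itop) :
    μ ≤ Bp := by
  have h1 : TF n d p x itop ≤ ∑ m, p itop m := by
    unfold TF
    calc ∑ m : Fin (d-1) → Fin n, p itop m * ∏ k, x (m k)
        ≤ ∑ m : Fin (d-1) → Fin n, p itop m * 1 :=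
          Finset.sum_le_sum fun m _ =>
            mul_le_mul_of_nonneg_left (prod_le_one' hx0 hx1 m) (hp itop m)
      _ = ∑ m, p itop m := by simp
  have h2 : (∑ m, p itop m) ≤ Bp := hBple itop
  rw [htop, one_pow, mul_one] at hfeas
  linarith

theorem posCase (n d : ℕ) (hn : 1 ≤ n) (hd : 2 ≤ d)
    (p : Fin n → (Fin (d-1) → Fin n) → ℝ) (hp : ∀ i m, 0 < p i m) :
    ∃ lam : ℝ, 0 < lam ∧ ∃ x : Fin n → ℝ, (∀ i, 0 < x i) ∧ (∀ i, x i ≤ 1) ∧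
      (∃ i, x i = 1) ∧ ∀ i, TF n d p x i = lam * x i ^ (d-1) := by
  classical
  haveI hnn : Nonempty (Fin n) := ⟨⟨0, hn⟩⟩
  haveI hdd : Nonempty (Fin (d-1)) := ⟨⟨0, by omega⟩⟩
  have hd1 : d - 1 ≠ 0 := by omega
  have hp' : ∀ i m, 0 ≤ p i m := fun i m => (hp i m).le
  set Bp : ℝ := univ.sup' (univ_nonempty (α := Fin n)) (fun i => ∑ m, p i m) with hBp
  set pmin : ℝ := univ.inf' (univ_nonempty (α := Fin n × ((Fin (d-1)) → Fin n)))
    (fun q => p q.1 q.2) with hpmin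
  have hpmin_pos : 0 < pmin := by
    rw [hpmin, Finset.lt_inf'_iff]
    exact fun q _ => hp q.1 q.2
  have hpmin_le : ∀ i m, pmin ≤ p i m := fun i m =>
    Finset.inf'_le _ (Finset.mem_univ (i, m))
  have hrowpos : ∀ i, 0 < ∑ m, p i m :=
    fun i => Finset.sum_pos (fun m _ => hp i m) univ_nonempty
  have hBp_pos : 0 < Bp := by
    have h := hrowpos (Classical.arbitrary (Fin n))
    have h2 : (∑ m, p (Classical.arbitrary (Fin n)) m) ≤ Bp :=
      Finset.le_sup' (fun i => ∑ m, p i m) (Finset.mem_univ _)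
    linarith
  -- the feasible set
  set Ω : Set (ℝ × (Fin n → ℝ)) := {q | q.1 ∈ Icc 0 Bp ∧ (∀ i, 0 ≤ q.2 i ∧ q.2 i ≤ 1) ∧
    (∃ i, q.2 i = 1) ∧ ∀ i, q.1 * q.2 i ^ (d-1) ≤ TF n d p q.2 i} with hΩ
  have hclosed : IsClosed Ω := by
    rw [hΩ]
    have h1 : IsClosed {q : ℝ × (Fin n → ℝ) | q.1 ∈ Icc 0 Bp} :=
      isClosed_Icc.preimage continuous_fst
    have h2 : IsClosed {q : ℝ × (Fin n → ℝ) | ∀ i, 0 ≤ q.2 i ∧ q.2 i ≤ 1} := by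
      rw [show {q : ℝ × (Fin n → ℝ) | ∀ i, 0 ≤ q.2 i ∧ q.2 i ≤ 1}
        = ⋂ i, ({q : ℝ × (Fin n → ℝ) | 0 ≤ q.2 i} ∩ {q | q.2 i ≤ 1}) by
          ext q; simp [Set.mem_iInter, forall_and]]
      refine isClosed_iInter fun i => IsClosed.inter ?_ ?_
      · exact isClosed_le continuous_const ((continuous_apply i).comp continuous_snd)
      · exact isClosed_le ((continuous_apply i).comp continuous_snd) continuous_const
    have h3 : IsClosed {q : ℝ × (Fin n → ℝ) | ∃ i, q.2 i = 1} := by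
      rw [show {q : ℝ × (Fin n → ℝ) | ∃ i, q.2 i = 1}
        = ⋃ i, {q : ℝ × (Fin n → ℝ) | q.2 i = 1} by ext q; simp]
      exact isClosed_iUnion_of_finite fun i =>
        isClosed_eq ((continuous_apply i).comp continuous_snd) continuous_const
    have h4 : IsClosed {q : ℝ × (Fin n → ℝ) | ∀ i, q.1 * q.2 i ^ (d-1) ≤ TF n d p q.2 i} := by
      rw [show {q : ℝ × (Fin n → ℝ) | ∀ i, q.1 * q.2 i ^ (d-1) ≤ TF n d p q.2 i}
        = ⋂ i, {q : ℝ × (Fin n → ℝ) | q.1 * q.2 i ^ (d-1) ≤ TF n d p q.2 i} by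
          ext q; simp [Set.mem_iInter]]
      refine isClosed_iInter fun i => isClosed_le ?_ ?_
      · exact continuous_fst.mul (((continuous_apply i).comp continuous_snd).pow _)
      · exact (continuous_TF p i).comp continuous_snd
    have heq : {q : ℝ × (Fin n → ℝ) | q.1 ∈ Icc 0 Bp ∧ (∀ i, 0 ≤ q.2 i ∧ q.2 i ≤ 1) ∧
        (∃ i, q.2 i = 1) ∧ ∀ i, q.1 * q.2 i ^ (d-1) ≤ TF n d p q.2 i}
        = (({q : ℝ × (Fin n → ℝ) | q.1 ∈ Icc 0 Bp} ∩ {q | ∀ i, 0 ≤ q.2 i ∧ q.2 i ≤ 1})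
          ∩ {q | ∃ i, q.2 i = 1}) ∩ {q | ∀ i, q.1 * q.2 i ^ (d-1) ≤ TF n d p q.2 i} := by
      ext q
      simp only [Set.mem_inter_iff, Set.mem_setOf_eq]
      tauto
    rw [heq]
    exact ((h1.inter h2).inter h3).inter h4
  have hBple : ∀ i, (∑ m, p i m) ≤ Bp :=
    fun i => Finset.le_sup' (fun i => ∑ m, p i m) (Finset.mem_univ i)
  have hsub : Ω ⊆ (Icc 0 Bp) ×ˢ (Icc (fun _ => (0:ℝ)) (fun _ => (1:ℝ))) := by
    rintro ⟨μ, x⟩ ⟨h1, h2, _, _⟩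
    refine ⟨h1, ?_, ?_⟩
    · intro i; exact (h2 i).1
    · intro i; exact (h2 i).2
  have hcomp : IsCompact Ω :=
    IsCompact.of_isClosed_subset (isCompact_Icc.prod isCompact_Icc) hclosed hsub
  set lmin : ℝ := univ.inf' (univ_nonempty (α := Fin n)) (fun i => ∑ m, p i m) with hlmin
  have hlmin_pos : 0 < lmin := by
    rw [hlmin, Finset.lt_inf'_iff]; exact fun i _ => hrowpos i
  have hlmin_le : ∀ i, lmin ≤ ∑ m, p i m :=
    fun i => Finset.inf'_le _ (Finset.mem_univ i)
  have hone : ((lmin, fun _ => (1:ℝ)) : ℝ × (Fin n → ℝ)) ∈ Ω := by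
    refine ⟨⟨hlmin_pos.le, le_trans (hlmin_le (Classical.arbitrary _)) (hBple _)⟩,
      fun i => ⟨zero_le_one, le_rfl⟩, ⟨Classical.arbitrary _, rfl⟩, fun i => ?_⟩
    have : TF n d p (fun _ => (1:ℝ)) i = ∑ m, p i m := by
      unfold TF
      refine Finset.sum_congr rfl fun m _ => ?_
      rw [Finset.prod_const, one_pow, mul_one]
    rw [this, one_pow, mul_one]
    exact hlmin_le i
  obtain ⟨q, hqΩ, hqmax⟩ := hcomp.exists_isMaxOn ⟨_, hone⟩ continuous_fst.continuousOn
  obtain ⟨lam, x⟩ := q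
  obtain ⟨hlam_mem, hx01, hxtop, hfeas⟩ := hqΩ
  replace hlam_mem : lam ∈ Icc 0 Bp := hlam_mem
  replace hx01 : ∀ i, 0 ≤ x i ∧ x i ≤ 1 := hx01
  replace hxtop : ∃ i, x i = 1 := hxtop
  replace hfeas : ∀ i, lam * x i ^ (d-1) ≤ TF n d p x i := hfeas
  have hmax : ∀ μ y, (μ, y) ∈ Ω → μ ≤ lam := fun μ y h => hqmax h
  have hlam_pos : 0 < lam := lt_of_lt_of_le hlmin_pos (hmax _ _ hone)
  have hx0 : ∀ i, 0 ≤ x i := fun i => (hx01 i).1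
  have hx1 : ∀ i, x i ≤ 1 := fun i => (hx01 i).2
  -- Claim 1 : x is strictly positive
  have hxpos : ∀ i, 0 < x i := by
    by_contra hcon
    push_neg at hcon
    obtain ⟨j, hj⟩ := hcon
    have hxj : x j = 0 := le_antisymm hj (hx0 j)
    obtain ⟨i1, hi1⟩ := hxtop
    have hij : i1 ≠ j := by intro h; rw [h, hxj] at hi1; norm_num at hi1
    set t : ℝ := min 1 (pmin / (Bp + 1)) with ht
    have ht_pos : 0 < t := lt_min one_pos (div_pos hpmin_pos (by linarith))
    have ht1 : t ≤ 1 := min_le_left _ _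
    have ht2 : t ≤ pmin / (Bp + 1) := min_le_right _ _
    set ε : ℝ := min 1 (pmin * t ^ (d-1)) with hε
    have hε_pos : 0 < ε := lt_min one_pos (mul_pos hpmin_pos (pow_pos ht_pos _))
    have hε1 : ε ≤ 1 := min_le_left _ _
    have hε2 : ε ≤ pmin * t ^ (d-1) := min_le_right _ _
    set y : Fin n → ℝ := Function.update x j t with hy
    have hyx : ∀ i, x i ≤ y i := by
      intro i
      by_cases h : i = j
      · subst h; rw [hy, Function.update_self, hxj]; exact ht_pos.le
      · rw [hy, Function.update_of_ne h]
    have hy0 : ∀ i, 0 ≤ y i := fun i => le_trans (hx0 i) (hyx i)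
    have hy1 : ∀ i, y i ≤ 1 := by
      intro i
      by_cases h : i = j
      · subst h; rw [hy, Function.update_self]; exact ht1
      · rw [hy, Function.update_of_ne h]; exact hx1 i
    have hyi1 : y i1 = 1 := by rw [hy, Function.update_of_ne hij]; exact hi1
    have hyj : y j = t := by rw [hy, Function.update_self]
    have hfeas' : ∀ i, (lam + ε) * y i ^ (d-1) ≤ TF n d p y i := by
      intro i0
      by_cases h : i0 = j
      · rw [h, hyj]
        have h1 : (lam + ε) * t ^ (d-1) ≤ (Bp + 1) * t ^ (d-1) := by
          have : lam + ε ≤ Bp + 1 := add_le_add hlam_mem.2 hε1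
          exact mul_le_mul_of_nonneg_right this (pow_nonneg ht_pos.le _)
        have h2 : (Bp + 1) * t ^ (d-1) ≤ pmin := by
          have htd : t ^ (d-1) ≤ t := pow_le_of_le_one ht_pos.le ht1 (by omega)
          have : (Bp + 1) * t ^ (d-1) ≤ (Bp + 1) * t :=
            mul_le_mul_of_nonneg_left htd (by linarith)
          have h3 : (Bp + 1) * t ≤ pmin := by
            rw [ht]
            calc (Bp + 1) * min 1 (pmin / (Bp+1)) ≤ (Bp + 1) * (pmin / (Bp+1)) :=
              mul_le_mul_of_nonneg_left (min_le_right _ _) (by linarith)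
            _ = pmin := by field_simp
          linarith
        have h3 : pmin ≤ TF n d p y j := by
          have hterm := term_le_TF hp' hy0 j (fun _ => i1)
          have hprod : ∏ k : Fin (d-1), y i1 = 1 := by
            rw [Finset.prod_const, hyi1, one_pow]
          rw [hprod, mul_one] at hterm
          exact le_trans (hpmin_le j _) hterm
        linarith
      · rw [show y i0 = x i0 by rw [hy, Function.update_of_ne h]]
        have hgain := TF_gain p hp' hx0 hyx i0 (fun _ => j)
        have hprodx : ∏ _k : Fin (d-1), x j = 0 := by
          rw [Finset.prod_const, Finset.card_univ, Fintype.card_fin, hxj, zero_pow (by omega)]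
        have hprody : ∏ _k : Fin (d-1), y j = t ^ (d-1) := by
          rw [Finset.prod_const, Finset.card_univ, Fintype.card_fin, hyj]
        rw [hprodx, hprody, sub_zero] at hgain
        have h1 : pmin * t ^ (d-1) ≤ p i0 (fun _ => j) * t ^ (d-1) :=
          mul_le_mul_of_nonneg_right (hpmin_le i0 _) (pow_nonneg ht_pos.le _)
        have h2 : ε * x i0 ^ (d-1) ≤ pmin * t ^ (d-1) := by
          have hpow : x i0 ^ (d-1) ≤ 1 := pow_le_one₀ (hx0 i0) (hx1 i0)
          have := mul_le_mul_of_nonneg_left hpow hε_pos.le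
          rw [mul_one] at this
          linarith
        have h3 := hfeas i0
        nlinarith
    have hmem : ((lam + ε, y) : ℝ × (Fin n → ℝ)) ∈ Ω := by
      refine ⟨⟨show (0:ℝ) ≤ lam + ε by linarith, ?_⟩, fun i => ⟨hy0 i, hy1 i⟩, ⟨i1, hyi1⟩, hfeas'⟩
      exact feas_le_Bp hn hd p hp' hy0 hy1 hyi1 hBple (hfeas' i1)
    have := hmax _ _ hmem
    linarith
  -- Claim 2 : equality everywhere
  by_cases hall : ∀ i, lam * x i ^ (d-1) < TF n d p x i
  · exfalso
    set εA : ℝ := univ.inf' (univ_nonempty (α := Fin n))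
      (fun i => TF n d p x i - lam * x i ^ (d-1)) with hεA
    have hεA_pos : 0 < εA := by
      rw [hεA, Finset.lt_inf'_iff]
      intro i _
      have := hall i; linarith
    have hεA_le : ∀ i, εA ≤ TF n d p x i - lam * x i ^ (d-1) :=
      fun i => Finset.inf'_le _ (Finset.mem_univ i)
    have hfeas' : ∀ i, (lam + εA) * x i ^ (d-1) ≤ TF n d p x i := by
      intro i
      have h1 := hεA_le i
      have hpow : x i ^ (d-1) ≤ 1 := pow_le_one₀ (hx0 i) (hx1 i)
      nlinarith [hεA_pos]
    obtain ⟨i1, hi1⟩ := hxtop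
    have hmem : ((lam + εA, x) : ℝ × (Fin n → ℝ)) ∈ Ω :=
      ⟨⟨show (0:ℝ) ≤ lam + εA by linarith, feas_le_Bp hn hd p hp' hx0 hx1 hi1 hBple (hfeas' i1)⟩,
        hx01, ⟨i1, hi1⟩, hfeas'⟩
    have := hmax _ _ hmem
    linarith
  · push_neg at hall
    obtain ⟨i2, hi2⟩ := hall
    have heq2 : TF n d p x i2 = lam * x i2 ^ (d-1) := le_antisymm hi2 (hfeas i2)
    by_cases hstrict : ∃ i, lam * x i ^ (d-1) < TF n d p x i
    swap
    · -- all equalities : done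
      push_neg at hstrict
      exact ⟨lam, hlam_pos, x, hxpos, hx1, hxtop, fun i =>
        le_antisymm (hstrict i) (hfeas i)⟩
    exfalso
    obtain ⟨j0, hj0⟩ := hstrict
    set T : Finset (Fin n) := univ.filter (fun i => lam * x i ^ (d-1) < TF n d p x i) with hT
    have hj0T : j0 ∈ T := by rw [hT]; simp [hj0]
    set Δ : ℝ → ℝ := fun t => pmin * ((x j0 + t) ^ (d-1) - x j0 ^ (d-1)) with hΔ
    have hΔcont : Continuous Δ := by
      rw [hΔ]
      exact continuous_const.mul
        (((continuous_const.add continuous_id).pow _).sub continuous_const)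
    -- choose t small enough
    have hev : ∀ᶠ t in nhdsWithin (0:ℝ) (Set.Ioi 0),
        (∀ i ∈ T, (lam + Δ t) * (x i + t) ^ (d-1) < TF n d p x i) ∧ 0 < t := by
      have h2 : ∀ᶠ t in nhdsWithin (0:ℝ) (Set.Ioi 0), 0 < t :=
        eventually_mem_nhdsWithin
      refine h2.and ?_ |>.mono fun t ⟨h1, h2⟩ => ⟨h2, h1⟩
      have : ∀ᶠ t in nhds (0:ℝ), ∀ i ∈ T, (lam + Δ t) * (x i + t) ^ (d-1) < TF n d p x i := by
        rw [Filter.eventually_all_finset]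
        intro i hiT
        have hic : Continuous fun t => (lam + Δ t) * (x i + t) ^ (d-1) :=
          (continuous_const.add hΔcont).mul ((continuous_const.add continuous_id).pow _)
        have h0 : (lam + Δ 0) * (x i + 0) ^ (d-1) < TF n d p x i := by
          simp only [hΔ, add_zero, sub_self, mul_zero]
          exact (Finset.mem_filter.1 hiT).2
        have := hic.continuousAt (x := (0:ℝ))
        exact this.eventually_lt continuousAt_const h0
      exact nhdsWithin_le_nhds this
    obtain ⟨t, ⟨hlt, ht_pos⟩⟩ := hev.exists
    set y : Fin n → ℝ := fun i => if i ∈ T then x i + t else x i with hy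
    have hyx : ∀ i, x i ≤ y i := by
      intro i
      rw [hy]
      by_cases h : i ∈ T <;> simp [h, ht_pos.le]
    have hy0 : ∀ i, 0 ≤ y i := fun i => le_trans (hx0 i) (hyx i)
    have hΔpos : 0 < Δ t := by
      have hlt2 : x j0 ^ (d-1) < (x j0 + t) ^ (d-1) :=
        pow_lt_pow_left₀ (by linarith) (hx0 j0) (by omega)
      simp only [hΔ]
      exact mul_pos hpmin_pos (by linarith)
    have hΔfeas : ∀ i, (lam + Δ t) * y i ^ (d-1) ≤ TF n d p y i := by
      intro i
      by_cases h : i ∈ T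
      · have h1 := hlt i h
        have h2 : TF n d p x i ≤ TF n d p y i := TF_le_TF hp' hx0 hyx i
        have : y i = x i + t := by rw [hy]; simp [h]
        rw [this]
        linarith
      · have hyi : y i = x i := by rw [hy]; simp [h]
        have hgain := TF_gain p hp' hx0 hyx i (fun _ => j0)
        have hprodx : ∏ _k : Fin (d-1), x j0 = x j0 ^ (d-1) := by
          rw [Finset.prod_const, Finset.card_univ, Fintype.card_fin]
        have hprody : ∏ _k : Fin (d-1), y j0 = (x j0 + t) ^ (d-1) := by
          have : y j0 = x j0 + t := by rw [hy]; simp [hj0T]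
          rw [Finset.prod_const, this, Finset.card_univ, Fintype.card_fin]
        rw [hprodx, hprody] at hgain
        have h1 : Δ t ≤ p i (fun _ => j0) * ((x j0 + t) ^ (d-1) - x j0 ^ (d-1)) := by
          rw [hΔ]
          have hd0 : (0:ℝ) ≤ (x j0 + t) ^ (d-1) - x j0 ^ (d-1) := by
            have : x j0 ^ (d-1) ≤ (x j0 + t) ^ (d-1) :=
              pow_le_pow_left₀ (hx0 j0) (by linarith) _
            linarith
          exact mul_le_mul_of_nonneg_right (hpmin_le i _) hd0
        have h2 : Δ t * x i ^ (d-1) ≤ Δ t := by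
          have hpow : x i ^ (d-1) ≤ 1 := pow_le_one₀ (hx0 i) (hx1 i)
          nlinarith
        have h3 := hfeas i
        rw [hyi]
        nlinarith
    -- rescale
    obtain ⟨iM, hiM, hsM⟩ := Finset.exists_mem_eq_sup' (univ_nonempty (α := Fin n)) y
    set s : ℝ := univ.sup' (univ_nonempty (α := Fin n)) y with hs
    obtain ⟨i1, hi1⟩ := hxtop
    have hs1 : 1 ≤ s := by
      rw [hs]
      refine le_trans ?_ (Finset.le_sup' y (Finset.mem_univ i1))
      rw [← hi1]; exact hyx i1
    have hs_pos : 0 < s := by linarith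
    set z : Fin n → ℝ := fun i => s⁻¹ * y i with hz
    have hz0 : ∀ i, 0 ≤ z i := fun i => mul_nonneg (by positivity) (hy0 i)
    have hz1 : ∀ i, z i ≤ 1 := by
      intro i
      simp only [hz]
      have h : y i ≤ s := Finset.le_sup' y (Finset.mem_univ i)
      rw [inv_mul_le_iff₀ hs_pos, mul_one]
      exact h
    have hztop : z iM = 1 := by
      simp only [hz]
      rw [← hsM]
      exact inv_mul_cancel₀ (ne_of_gt hs_pos)
    have hzfeas : ∀ i, (lam + Δ t) * z i ^ (d-1) ≤ TF n d p z i := by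
      intro i
      have := hΔfeas i
      have hTFz : TF n d p z i = (s⁻¹) ^ (d-1) * TF n d p y i := TF_smul hd s⁻¹ y i
      rw [hTFz]
      simp only [hz]
      have heq : (lam + Δ t) * (s⁻¹ * y i) ^ (d-1) = (s⁻¹)^(d-1) * ((lam + Δ t) * y i ^ (d-1)) := by
        rw [mul_pow]; ring
      rw [heq]
      exact mul_le_mul_of_nonneg_left (hΔfeas i) (by positivity)
    have hmem : ((lam + Δ t, z) : ℝ × (Fin n → ℝ)) ∈ Ω :=
      ⟨⟨show (0:ℝ) ≤ lam + Δ t by linarith, feas_le_Bp hn hd p hp' hz0 hz1 hztop hBple (hzfeas iM)⟩,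
        fun i => ⟨hz0 i, hz1 i⟩, ⟨iM, hztop⟩, hzfeas⟩
    have := hmax _ _ hmem
    linarith

end poscase

section keylemma
variable {n d : ℕ}

set_option maxHeartbeats 2000000 in
theorem keyLemma (hn : 1 ≤ n) (hd : 2 ≤ d)
    (a b : Fin n → (Fin (d-1) → Fin n) → ℝ)
    (ha : ∀ i m, 0 ≤ a i m) (hb : ∀ i m, 0 ≤ b i m)
    (hpat : ∀ i m, 0 < b i m ↔ 0 < a i m) (hrow : ∀ i, ∃ m, 0 < a i m)
    {C : Set (Fin n)} (hC : TFinalClass n d a C)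
    (hfull : TReach n d a C = Set.univ) :
    ∃ δ ε0 : ℝ, 0 < δ ∧ 0 < ε0 ∧ ∀ (ε lam : ℝ) (x : Fin n → ℝ), 0 < ε → ε ≤ ε0 →
      (∀ i, 0 < x i) → (∀ i, x i ≤ 1) → (∃ i, x i = 1) →
      (∀ i, TF n d (fun i m => b i m + ε) x i = lam * x i ^ (d-1)) →
      ∀ i, δ ≤ x i := by
  classical
  haveI hnn : Nonempty (Fin n) := ⟨⟨0, hn⟩⟩
  haveI hdd : Nonempty (Fin (d-1)) := ⟨⟨0, by omega⟩⟩
  set Bs : ℝ := univ.sup' (univ_nonempty' hn) (fun i => ∑ m, b i m) with hBs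
  set rmin : ℝ := univ.inf' (univ_nonempty' hn) (fun i => ∑ m, b i m) with hrmin
  have hrowb : ∀ i, 0 < ∑ m, b i m := by
    intro i
    obtain ⟨m0, hm0⟩ := hrow i
    exact Finset.sum_pos' (fun m _ => hb i m) ⟨m0, Finset.mem_univ m0, (hpat i m0).2 hm0⟩
  have hrmin_pos : 0 < rmin := by
    rw [hrmin, Finset.lt_inf'_iff]; exact fun i _ => hrowb i
  have hrmin_le : ∀ i, rmin ≤ ∑ m, b i m :=
    fun i => Finset.inf'_le _ (Finset.mem_univ i)
  have hBs_ge : ∀ i, (∑ m, b i m) ≤ Bs :=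
    fun i => Finset.le_sup' (fun i => ∑ m, b i m) (Finset.mem_univ i)
  have hBs_pos : 0 < Bs := lt_of_lt_of_le (hrowb (Classical.arbitrary _)) (hBs_ge _)
  set B' : ℝ := Bs + (n:ℝ)^(d-1) with hB'
  have hB'_pos : 0 < B' := by
    have : (0:ℝ) < (n:ℝ)^(d-1) := by positivity
    linarith
  -- bmin
  set Pf : Finset (Fin n × (Fin (d-1) → Fin n)) :=
    univ.filter (fun q => 0 < a q.1 q.2) with hPf
  have hPfne : Pf.Nonempty := by
    obtain ⟨m0, hm0⟩ := hrow (Classical.arbitrary _)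
    refine ⟨(Classical.arbitrary _, m0), ?_⟩
    rw [hPf, Finset.mem_filter]
    exact ⟨Finset.mem_univ _, hm0⟩
  set bmin : ℝ := Pf.inf' hPfne (fun q => b q.1 q.2) with hbmin_def
  have hbmin_pos : 0 < bmin := by
    rw [hbmin_def, Finset.lt_inf'_iff]
    rintro ⟨i, m⟩ hq
    rw [hPf, Finset.mem_filter] at hq
    exact (hpat i m).2 hq.2
  have hblow : ∀ i m, 0 < a i m → bmin ≤ b i m := by
    intro i m him
    have hmem : (i, m) ∈ Pf := by
      rw [hPf, Finset.mem_filter]; exact ⟨Finset.mem_univ _, him⟩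
    exact Finset.inf'_le (fun q => b q.1 q.2) hmem
  -- layers
  set R : ℕ → Set (Fin n) := fun t => (Phi a)^[t] C with hRdef
  have hRn : R n = Set.univ := layers a C hC.1 hfull
  have hmonoR : ∀ t, R t ⊆ R (t+1) := by
    intro t
    have h : R (t+1) = Phi a (R t) := Function.iterate_succ_apply' _ _ _
    rw [h]; exact Phi_mono_incl a _
  have hCsub : ∀ t, C ⊆ R t := by
    intro t
    induction t with
    | zero => exact subset_rfl
    | succ t ih => exact fun c hc => hmonoR t (ih hc)
  have hCfne : ((Set.toFinite C).toFinset).Nonempty := by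
    obtain ⟨c, hc⟩ := hC.1
    exact ⟨c, (Set.Finite.mem_toFinset _).2 hc⟩
  have hRfne : ∀ t, ((Set.toFinite (R t)).toFinset).Nonempty := by
    intro t
    obtain ⟨c, hc⟩ := hC.1
    exact ⟨c, (Set.Finite.mem_toFinset _).2 (hCsub t hc)⟩
  -- chain
  obtain ⟨κC, hκC_pos, hchain⟩ :=
    chainC_all hn hd a b hb hC hCfne hbmin_pos hB'_pos hblow
  -- tau recursion
  set τ : ℕ → ℝ := fun s =>
    Nat.rec (1:ℝ) (fun _ τs => min τs (rmin * τs^(d-1) / (2*Bs))) s with hτdef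
  have hτ0 : τ 0 = 1 := rfl
  have hτs : ∀ s, τ (s+1) = min (τ s) (rmin * (τ s)^(d-1) / (2*Bs)) := fun s => rfl
  have hτpos : ∀ s, 0 < τ s := by
    intro s
    induction s with
    | zero => rw [hτ0]; exact one_pos
    | succ s ih =>
      rw [hτs]
      exact lt_min ih (by positivity)
  have hτanti : ∀ s t, s ≤ t → τ t ≤ τ s := by
    intro s t hst
    induction t with
    | zero => interval_cases s; exact le_rfl
    | succ t ih =>
      rcases Nat.lt_or_ge s (t+1) with h | h
      · exact le_trans (by rw [hτs]; exact min_le_left _ _) (ih (by omega))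
      · have : s = t + 1 := by omega
        subst this; exact le_rfl
  have hτle1 : ∀ s, τ s ≤ 1 := fun s => by
    have := hτanti 0 s (Nat.zero_le s); rwa [hτ0] at this
  set ε0 : ℝ := min 1 (rmin * (τ n)^(d-1) / (2 * (n:ℝ)^(d-1))) with hε0
  have hε0_pos : 0 < ε0 := by
    have h1 : (0:ℝ) < (n:ℝ)^(d-1) := by positivity
    exact lt_min one_pos
      (div_pos (mul_pos hrmin_pos (pow_pos (hτpos n) _)) (by positivity))
  -- max over C lower bound
  have hmaxC : ∀ (ε lam : ℝ) (x : Fin n → ℝ), 0 < ε → ε ≤ ε0 →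
      (∀ i, 0 < x i) → (∀ i, x i ≤ 1) → (∃ i, x i = 1) →
      (∀ i, TF n d (fun i m => b i m + ε) x i = lam * x i ^ (d-1)) →
      (rmin ≤ lam) →
      τ n ≤ ((Set.toFinite C).toFinset).sup' hCfne x := by
    intro ε lam x hε hεle hx0 hx1 hxtop heig hlamr
    have hstep : ∀ s, s ≤ n → τ s ≤ ((Set.toFinite (R (n - s))).toFinset).sup' (hRfne _) x := by
      intro s
      induction s with
      | zero =>
        intro _
        obtain ⟨i1, hi1⟩ := hxtop
        rw [hτ0]
        have : i1 ∈ (Set.toFinite (R (n - 0))).toFinset := by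
          rw [Set.Finite.mem_toFinset]
          simp only [Nat.sub_zero, hRn]
          trivial
        calc (1:ℝ) = x i1 := hi1.symm
          _ ≤ _ := Finset.le_sup' x this
      | succ s ih =>
        intro hsn
        have htdef : n - s = (n - (s+1)) + 1 := by omega
        set t := n - (s+1) with ht
        have ihs : τ s ≤ ((Set.toFinite (R (t+1))).toFinset).sup' (hRfne _) x := by
          have := ih (by omega)
          rw [htdef] at this
          exact this
        obtain ⟨i, hi, hieq⟩ := Finset.exists_mem_eq_sup' (hRfne (t+1)) x
        rw [Set.Finite.mem_toFinset] at hi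
        have hxi : τ s ≤ x i := by rw [← hieq]; exact ihs
        rcases layer_step a t C hi with hcase | hcase
        · -- already in previous layer
          refine le_trans (le_trans ?_ hxi) (Finset.le_sup' x ((Set.Finite.mem_toFinset _).2 hcase))
          rw [hτs]; exact min_le_left _ _
        · -- reach step
          set Mx := ((Set.toFinite (R t)).toFinset).sup' (hRfne t) x with hMx
          have hMx_pos : 0 < Mx := by
            rw [hMx, Finset.lt_sup'_iff]
            obtain ⟨c, hc⟩ := hC.1
            exact ⟨c, (Set.Finite.mem_toFinset _).2 (hCsub t hc), hx0 c⟩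
          have hTFb : TF n d b x i ≤ Bs * Mx := by
            have h1 : TF n d b x i ≤ (∑ m, b i m) * Mx := by
              refine TF_le_rowsum_mul hd hb (fun j => (hx0 j).le) hx1 hMx_pos.le i ?_
              intro m hbm
              obtain ⟨k0, hk0⟩ := hcase m ((hpat i m).1 hbm)
              calc ∏ k, x (m k) ≤ x (m k0) :=
                    prod_le_factor (fun j => (hx0 j).le) hx1 k0
                _ ≤ Mx := Finset.le_sup' x ((Set.Finite.mem_toFinset _).2 hk0)
            exact le_trans h1 (mul_le_mul_of_nonneg_right (hBs_ge i) hMx_pos.le)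
          have hTE : ε * TE n d x i ≤ rmin * (τ s)^(d-1) / 2 := by
            have h1 : TE n d x i ≤ (n:ℝ)^(d-1) := TE_le hn (fun j => (hx0 j).le) hx1 hd i
            have h2 : ε * TE n d x i ≤ ε * (n:ℝ)^(d-1) :=
              mul_le_mul_of_nonneg_left h1 hε.le
            have h3 : ε * (n:ℝ)^(d-1) ≤ (rmin * (τ n)^(d-1) / (2 * (n:ℝ)^(d-1))) * (n:ℝ)^(d-1) := by
              refine mul_le_mul_of_nonneg_right (le_trans hεle ?_) (by positivity)
              rw [hε0]; exact min_le_right _ _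
            have h4 : (rmin * (τ n)^(d-1) / (2 * (n:ℝ)^(d-1))) * (n:ℝ)^(d-1)
                = rmin * (τ n)^(d-1) / 2 := by
              field_simp
            have h5 : rmin * (τ n)^(d-1) / 2 ≤ rmin * (τ s)^(d-1) / 2 := by
              have := pow_le_pow_left₀ (hτpos n).le (hτanti s n (by omega)) (d-1)
              nlinarith [hrmin_pos]
            linarith
          have hkey : rmin * (τ s)^(d-1) ≤ Bs * Mx + rmin * (τ s)^(d-1) / 2 := by
            have h1 : rmin * (τ s)^(d-1) ≤ rmin * x i ^ (d-1) := by
              refine mul_le_mul_of_nonneg_left ?_ hrmin_pos.le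
              exact pow_le_pow_left₀ (hτpos s).le hxi _
            have h2 : rmin * x i ^ (d-1) ≤ lam * x i ^ (d-1) :=
              mul_le_mul_of_nonneg_right hlamr (pow_nonneg (hx0 i).le _)
            have h3 := heig i
            rw [TF_add_eps hd] at h3
            have h4 : TF n d b x i + ε * TE n d x i = lam * x i ^(d-1) := h3
            linarith
          have hMxlb : rmin * (τ s)^(d-1) / (2 * Bs) ≤ Mx := by
            rw [div_le_iff₀ (by positivity)]
            nlinarith
          refine le_trans ?_ hMxlb
          rw [hτs]
          exact min_le_right _ _
    have h := hstep n le_rfl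
    simp only [Nat.sub_self] at h
    exact h
  -- bootstrap along reach layers
  have hboot : ∀ t : ℕ, ∃ κ : ℝ, 0 < κ ∧ ∃ A : ℕ, ∀ (ε lam : ℝ) (x : Fin n → ℝ),
      0 < ε → (∀ i, 0 < x i) → (∀ i, x i ≤ 1) → (lam ≤ B') →
      (∀ i, TF n d (fun i m => b i m + ε) x i = lam * x i ^ (d-1)) →
      κ * (((Set.toFinite C).toFinset).inf' hCfne x) * ((univ.inf' (univ_nonempty' hn) x))^A
        ≤ (((Set.toFinite (R t)).toFinset).inf' (hRfne t) x)^(A+1) := by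
    intro t
    induction t with
    | zero =>
      refine ⟨1, one_pos, 0, fun ε lam x hε hx0 hx1 hlamB heig => ?_⟩
      simp only [pow_zero, mul_one, zero_add, pow_one, one_mul]
      exact le_of_eq (inf'_set_congr (show C = R 0 from rfl) hCfne (hRfne 0) x)
    | succ t ih =>
      obtain ⟨κ, hκ, A, hQ⟩ := ih
      set c0 : ℝ := min 1 (bmin / B') with hc0
      have hc0_pos : 0 < c0 := lt_min one_pos (div_pos hbmin_pos hB'_pos)
      have hc0_le1 : c0 ≤ 1 := min_le_left _ _
      refine ⟨c0^(A+1) * κ, mul_pos (pow_pos hc0_pos _) hκ, A + (d-2)*(A+1), fun ε lam x hε hx0 hx1 hlamB heig => ?_⟩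
      set mU := univ.inf' (univ_nonempty' hn) x with hmU
      set mC := ((Set.toFinite C).toFinset).inf' hCfne x with hmC
      set mt := ((Set.toFinite (R t)).toFinset).inf' (hRfne t) x with hmt
      set mt1 := ((Set.toFinite (R (t+1))).toFinset).inf' (hRfne (t+1)) x with hmt1
      have hmU_pos : 0 < mU := by
        rw [hmU, Finset.lt_inf'_iff]; exact fun i _ => hx0 i
      have hmt_pos : 0 < mt := by
        rw [hmt, Finset.lt_inf'_iff]; exact fun i _ => hx0 i
      have hmt1_pos : 0 < mt1 := by
        rw [hmt1, Finset.lt_inf'_iff]; exact fun i _ => hx0 i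
      have hmU_le : ∀ j, mU ≤ x j := fun j => Finset.inf'_le x (Finset.mem_univ j)
      have hmUle1 : mU ≤ 1 := le_trans (hmU_le (Classical.arbitrary _)) (hx1 _)
      -- the one-step inequality
      have hstep : c0 * (mt * mU^(d-2)) ≤ mt1^(d-1) := by
        obtain ⟨i, hi, hieq⟩ := Finset.exists_mem_eq_inf' (hRfne (t+1)) x
        rw [← hmt1] at hieq
        rw [Set.Finite.mem_toFinset] at hi
        rcases layer_step a t C hi with hcase | hcase
        · -- i already in layer t
          have h1 : mt ≤ mt1 := by
            rw [hieq]
            exact Finset.inf'_le x ((Set.Finite.mem_toFinset _).2 hcase)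
          have h2 : mU^(d-2) ≤ mt1^(d-2) := by
            rw [hieq]
            exact pow_le_pow_left₀ hmU_pos.le (hmU_le i) _
          have h3 : mt1 ^ (d-1) = mt1 * mt1 ^(d-2) := by
            rw [← pow_succ']
            congr 1
            omega
          have h4 : mt * mU^(d-2) ≤ mt1 * mt1^(d-2) :=
            mul_le_mul h1 h2 (pow_nonneg hmU_pos.le _) hmt1_pos.le
          rw [h3]
          calc c0 * (mt * mU^(d-2)) ≤ 1 * (mt * mU^(d-2)) :=
                mul_le_mul_of_nonneg_right hc0_le1
                  (mul_nonneg hmt_pos.le (pow_nonneg hmU_pos.le _))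
            _ = mt * mU^(d-2) := one_mul _
            _ ≤ mt1 * mt1^(d-2) := h4
        · -- reach step
          obtain ⟨m0, hm0⟩ := hrow i
          obtain ⟨k0, hk0⟩ := hcase m0 hm0
          have hprod : x (m0 k0) * mU ^ (d-2) ≤ ∏ k, x (m0 k) :=
            prod_ge_factor hd hmU_pos.le k0 (fun k => hmU_le (m0 k))
          have h1 : bmin * (mt * mU^(d-2)) ≤ b i m0 * ∏ k, x (m0 k) := by
            have ha1 : mt ≤ x (m0 k0) := Finset.inf'_le x ((Set.Finite.mem_toFinset _).2 hk0)
            have ha2 : mt * mU^(d-2) ≤ x (m0 k0) * mU^(d-2) :=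
              mul_le_mul_of_nonneg_right ha1 (pow_nonneg hmU_pos.le _)
            have ha3 : bmin * (mt * mU^(d-2)) ≤ bmin * ∏ k, x (m0 k) :=
              mul_le_mul_of_nonneg_left (le_trans ha2 hprod) hbmin_pos.le
            have ha4 : bmin * ∏ k, x (m0 k) ≤ b i m0 * ∏ k, x (m0 k) :=
              mul_le_mul_of_nonneg_right (hblow i m0 hm0)
                (prod_nonneg' (fun j => (hx0 j).le) m0)
            linarith
          have h2 : b i m0 * ∏ k, x (m0 k) ≤ TF n d b x i :=
            term_le_TF hb (fun j => (hx0 j).le) i m0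
          have h3 : TF n d b x i ≤ lam * x i ^ (d-1) :=
            super_eigen hd (fun j => (hx0 j).le) hε.le heig i
          have h4 : lam * x i ^ (d-1) ≤ B' * x i ^(d-1) :=
            mul_le_mul_of_nonneg_right hlamB (pow_nonneg (hx0 i).le _)
          have h5 : bmin * (mt * mU^(d-2)) ≤ B' * x i ^ (d-1) := by linarith
          have h6 : c0 * (mt * mU^(d-2)) ≤ x i ^ (d-1) := by
            have hr : c0 ≤ bmin / B' := min_le_right _ _
            have hmm : c0 * (mt * mU^(d-2)) ≤ (bmin / B') * (mt * mU^(d-2)) :=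
              mul_le_mul_of_nonneg_right hr
                (mul_nonneg hmt_pos.le (pow_nonneg hmU_pos.le _))
            refine le_trans hmm ?_
            rw [div_mul_eq_mul_div, div_le_iff₀ hB'_pos, mul_comm (x i ^ (d-1)) B']
            exact h5
          rw [hieq]
          exact h6
      -- combine with inductive bound
      have hQx : κ * mC * mU^A ≤ mt^(A+1) := hQ ε lam x hε hx0 hx1 hlamB heig
      have hexp : (A + (d-2)*(A+1)) + 1 = (d-1)*(A+1) := by
        obtain ⟨e, rfl⟩ : ∃ e, d = e + 2 := ⟨d - 2, by omega⟩
        have h1 : e + 2 - 1 = e + 1 := by omega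
        have h2 : e + 2 - 2 = e := by omega
        rw [h1, h2]; ring
      have hlhs : (c0 * (mt * mU^(d-2)))^(A+1) ≤ (mt1^(d-1))^(A+1) :=
        pow_le_pow_left₀
          (mul_nonneg hc0_pos.le (mul_nonneg hmt_pos.le (pow_nonneg hmU_pos.le _)))
          hstep _
      have hre : (mt1^(d-1))^(A+1) = mt1 ^ ((A + (d-2)*(A+1)) + 1) := by
        rw [hexp, ← pow_mul]
      have hexpand : (c0 * (mt * mU^(d-2)))^(A+1)
          = c0^(A+1) * (mt^(A+1) * mU^((d-2)*(A+1))) := by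
        rw [mul_pow, mul_pow, ← pow_mul]
        try ring
      have hQpow := hQx
      have hfin : c0^(A+1) * κ * mC * mU^(A + (d-2)*(A+1))
          ≤ c0^(A+1) * (mt^(A+1) * mU^((d-2)*(A+1))) := by
        have hμpow : (0:ℝ) ≤ mU^((d-2)*(A+1)) := pow_nonneg hmU_pos.le _
        have h1 : (κ * mC * mU^A) * mU^((d-2)*(A+1)) ≤ mt^(A+1) * mU^((d-2)*(A+1)) :=
          mul_le_mul_of_nonneg_right hQpow hμpow
        calc c0^(A+1) * κ * mC * mU^(A + (d-2)*(A+1))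
            = c0^(A+1) * ((κ * mC * mU^A) * mU^((d-2)*(A+1))) := by
              rw [pow_add]; ring
          _ ≤ c0^(A+1) * (mt^(A+1) * mU^((d-2)*(A+1))) :=
              mul_le_mul_of_nonneg_left h1 (pow_nonneg hc0_pos.le _)
      calc c0^(A+1) * κ * mC * mU^(A + (d-2)*(A+1))
          ≤ c0^(A+1) * (mt^(A+1) * mU^((d-2)*(A+1))) := hfin
        _ = (c0 * (mt * mU^(d-2)))^(A+1) := hexpand.symm
        _ ≤ (mt1^(d-1))^(A+1) := hlhs
        _ = mt1 ^ ((A + (d-2)*(A+1)) + 1) := hre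
  -- conclusion
  obtain ⟨κn, hκn_pos, An, hbootn⟩ := hboot n
  refine ⟨κn * (τ n / κC), ε0, mul_pos hκn_pos (div_pos (hτpos n) hκC_pos), hε0_pos, ?_⟩
  intro ε lam x hε hεle hx0 hx1 hxtop heig i
  have hx0' : ∀ j, 0 ≤ x j := fun j => (hx0 j).le
  have hε1 : ε ≤ 1 := le_trans hεle (by rw [hε0]; exact min_le_left _ _)
  have hlamB : lam ≤ B' := by
    rw [hB']
    exact lam_le_B hn hd hb hx0' hx1 hxtop hε hε1 heig
  have hlamr : rmin ≤ lam := lam_ge_r hn hd hb hx0 hx1 hε.le heig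
  have hsup := super_eigen hd hx0' hε.le heig
  set mU := univ.inf' (univ_nonempty' hn) x with hmU
  set mC := ((Set.toFinite C).toFinset).inf' hCfne x with hmC
  have hmU_pos : 0 < mU := by
    rw [hmU, Finset.lt_inf'_iff]; exact fun j _ => hx0 j
  have hmC_pos : 0 < mC := by
    rw [hmC, Finset.lt_inf'_iff]; exact fun j _ => hx0 j
  -- min over R n equals global min
  have hminRn : ((Set.toFinite (R n)).toFinset).inf' (hRfne n) x = mU := by
    refine le_antisymm ?_ ?_
    · obtain ⟨j0, _, hj0⟩ := Finset.exists_mem_eq_inf' (univ_nonempty' hn) x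
      rw [hmU, hj0]
      refine Finset.inf'_le x ?_
      rw [Set.Finite.mem_toFinset, hRn]
      trivial
    · refine Finset.le_inf' _ _ fun j _ => ?_
      rw [hmU]
      exact Finset.inf'_le x (Finset.mem_univ j)
  -- apply bootstrap at n
  have hbn := hbootn ε lam x hε hx0 hx1 hlamB heig
  rw [hminRn, ← hmC] at hbn
  -- cancel
  have hcancel : κn * mC ≤ mU := by
    have h1 : (κn * mC) * mU^An ≤ mU * mU^An := by
      calc (κn * mC) * mU^An = κn * mC * mU^An := by ring
        _ ≤ mU^(An+1) := hbn
        _ = mU * mU^An := by rw [pow_succ]; ring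
    exact le_of_mul_le_mul_right h1 (pow_pos hmU_pos An)
  -- min over C bounded below
  have hmaxCx := hmaxC ε lam x hε hεle hx0 hx1 hxtop heig hlamr
  have hchainx := hchain x lam hx0 hx1 hlamB hsup
  have hmCtau : τ n / κC ≤ mC := by
    obtain ⟨w, hw, hweq⟩ := Finset.exists_mem_eq_sup' hCfne x
    have hwC : w ∈ C := (Set.Finite.mem_toFinset _).1 hw
    have h1 : τ n ≤ x w := by rw [← hweq]; exact hmaxCx
    have h2 : x w ≤ κC * mC := by
      rw [hmC]
      exact hchainx w hwC
    rw [div_le_iff₀ hκC_pos]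
    nlinarith
  have hfinal : κn * (τ n / κC) ≤ mU := by
    have h1 : κn * (τ n / κC) ≤ κn * mC :=
      mul_le_mul_of_nonneg_left hmCtau hκn_pos.le
    linarith
  calc κn * (τ n / κC) ≤ mU := hfinal
    _ ≤ x i := Finset.inf'_le x (Finset.mem_univ i)


end keylemma

section existence
open Filter Topology

theorem existsPosEig (n d : ℕ) (hn : 1 ≤ n) (hd : 2 ≤ d)
    (a b : Fin n → (Fin (d-1) → Fin n) → ℝ)
    (ha : ∀ i m, 0 ≤ a i m) (hb : ∀ i m, 0 ≤ b i m)
    (hpat : ∀ i m, 0 < b i m ↔ 0 < a i m) (hrow : ∀ i, ∃ m, 0 < a i m)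
    {C : Set (Fin n)} (hC : TFinalClass n d a C)
    (hfull : TReach n d a C = Set.univ) :
    ∃ lam : ℝ, 0 < lam ∧ ∃ u : Fin n → ℝ, (∀ i, 0 < u i) ∧
      ∀ i, TF n d b u i = lam * u i ^ (d-1) := by
  classical
  haveI hnn : Nonempty (Fin n) := ⟨⟨0, hn⟩⟩
  obtain ⟨δ, ε0, hδ, hε0, hkey⟩ := keyLemma hn hd a b ha hb hpat hrow hC hfull
  set ε1 : ℝ := min ε0 1 with hε1def
  have hε1_pos : 0 < ε1 := lt_min hε0 one_pos
  set εk : ℕ → ℝ := fun k => ε1 / (k+1) with hεk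
  have hεk_pos : ∀ k, 0 < εk k := fun k => by
    rw [hεk]
    positivity
  have hεk_le : ∀ k, εk k ≤ ε1 := by
    intro k
    rw [hεk]
    refine div_le_self hε1_pos.le ?_
    have : (1:ℝ) ≤ (k:ℝ) + 1 := by
      have : (0:ℝ) ≤ (k:ℝ) := Nat.cast_nonneg k
      linarith
    exact this
  have hεk_le0 : ∀ k, εk k ≤ ε0 := fun k => le_trans (hεk_le k) (min_le_left _ _)
  have hεk_le1 : ∀ k, εk k ≤ 1 := fun k => le_trans (hεk_le k) (min_le_right _ _)
  -- eigenpairs of the perturbed tensors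
  have hex : ∀ k : ℕ, ∃ q : ℝ × (Fin n → ℝ), (0 < q.1) ∧ (∀ i, 0 < q.2 i) ∧
      (∀ i, q.2 i ≤ 1) ∧ (∃ i, q.2 i = 1) ∧
      (∀ i, TF n d (fun i m => b i m + εk k) q.2 i = q.1 * q.2 i ^ (d-1)) := by
    intro k
    obtain ⟨lam, hlam, x, hx0, hx1, hxtop, heig⟩ :=
      posCase n d hn hd (fun i m => b i m + εk k)
        (fun i m => add_pos_of_nonneg_of_pos (hb i m) (hεk_pos k))
    exact ⟨(lam, x), hlam, hx0, hx1, hxtop, heig⟩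
  choose q hq1 hq2 hq3 hq4 hq5 using hex
  -- uniform bounds
  set rmin : ℝ := univ.inf' (univ_nonempty' hn) (fun i => ∑ m, b i m) with hrmin
  set Bq : ℝ := (univ.sup' (univ_nonempty' hn) (fun i => ∑ m, b i m)) + (n:ℝ)^(d-1) with hBq
  have hrowb : ∀ i, 0 < ∑ m, b i m := by
    intro i
    obtain ⟨m0, hm0⟩ := hrow i
    haveI : Nonempty (Fin (d-1)) := ⟨⟨0, by omega⟩⟩
    exact Finset.sum_pos' (fun m _ => hb i m) ⟨m0, Finset.mem_univ m0, (hpat i m0).2 hm0⟩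
  have hrmin_pos : 0 < rmin := by
    rw [hrmin, Finset.lt_inf'_iff]; exact fun i _ => hrowb i
  have hlam_lb : ∀ k, rmin ≤ (q k).1 :=
    fun k => lam_ge_r hn hd hb (hq2 k) (hq3 k) (hεk_pos k).le (hq5 k)
  have hlam_ub : ∀ k, (q k).1 ≤ Bq := by
    intro k
    rw [hBq]
    exact lam_le_B hn hd hb (fun i => (hq2 k i).le) (hq3 k) (hq4 k)
      (hεk_pos k) (hεk_le1 k) (hq5 k)
  have hxδ : ∀ k i, δ ≤ (q k).2 i := by
    intro k i
    exact hkey (εk k) (q k).1 (q k).2 (hεk_pos k) (hεk_le0 k)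
      (hq2 k) (hq3 k) (hq4 k) (hq5 k) i
  -- compactness
  set s : Set (ℝ × (Fin n → ℝ)) :=
    (Set.Icc rmin Bq) ×ˢ (Set.Icc (fun _ => δ) (fun _ => (1:ℝ))) with hs
  have hscomp : IsCompact s := isCompact_Icc.prod isCompact_Icc
  have hqmem : ∀ k, q k ∈ s := by
    intro k
    refine ⟨⟨hlam_lb k, hlam_ub k⟩, ?_, ?_⟩
    · intro i; exact hxδ k i
    · intro i; exact hq3 k i
  obtain ⟨⟨lam0, u0⟩, hmem, φ, hφ, hconv⟩ := hscomp.tendsto_subseq hqmem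
  have hφtop : Tendsto φ atTop atTop := hφ.tendsto_atTop
  have hconv1 : Tendsto (fun k => (q (φ k)).1) atTop (𝓝 lam0) :=
    (continuous_fst.tendsto _).comp hconv
  have hconv2 : Tendsto (fun k => (q (φ k)).2) atTop (𝓝 u0) :=
    (continuous_snd.tendsto _).comp hconv
  have hu0δ : ∀ i, δ ≤ u0 i := fun i => hmem.2.1 i
  have hlam0 : rmin ≤ lam0 := hmem.1.1
  refine ⟨lam0, lt_of_lt_of_le hrmin_pos hlam0, u0,
    fun i => lt_of_lt_of_le hδ (hu0δ i), fun i => ?_⟩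
  -- pass eigen equation to the limit
  have hTEbd : ∀ k, εk (φ k) * TE n d (q (φ k)).2 i ≤ εk (φ k) * (n:ℝ)^(d-1) := by
    intro k
    refine mul_le_mul_of_nonneg_left ?_ (hεk_pos _).le
    exact TE_le hn (fun j => (hq2 _ j).le) (hq3 _) hd i
  have hεφ0 : Tendsto (fun k => εk (φ k)) atTop (𝓝 0) := by
    have h1 : Tendsto (fun k : ℕ => ε1 * (1 / ((k:ℝ)+1))) atTop (𝓝 (ε1 * 0)) :=
      tendsto_const_nhds.mul tendsto_one_div_add_atTop_nhds_zero_nat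
    rw [mul_zero] at h1
    have h2 : Tendsto (fun k : ℕ => εk k) atTop (𝓝 0) := by
      refine h1.congr fun k => ?_
      rw [hεk]
      field_simp
    exact h2.comp hφtop
  have hTE0 : Tendsto (fun k => εk (φ k) * TE n d (q (φ k)).2 i) atTop (𝓝 0) := by
    refine squeeze_zero (fun k => ?_) (fun k => hTEbd k) ?_
    · exact mul_nonneg (hεk_pos _).le (TE_nonneg (fun j => (hq2 _ j).le) i)
    · have := hεφ0.mul_const ((n:ℝ)^(d-1))
      rwa [zero_mul] at this
  have hlhs : Tendsto (fun k => TF n d b (q (φ k)).2 i) atTop (𝓝 (TF n d b u0 i)) :=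
    ((continuous_TF b i).tendsto _).comp hconv2
  have hrhs : Tendsto (fun k => (q (φ k)).1 * (q (φ k)).2 i ^ (d-1)
      - εk (φ k) * TE n d (q (φ k)).2 i) atTop (𝓝 (lam0 * u0 i ^ (d-1) - 0)) := by
    refine Tendsto.sub ?_ hTE0
    refine Tendsto.mul hconv1 ?_
    have happ : Tendsto (fun k => (q (φ k)).2 i) atTop (𝓝 (u0 i)) :=
      ((continuous_apply i).tendsto _).comp hconv2
    exact happ.pow _
  have heqseq : ∀ k, TF n d b (q (φ k)).2 i
      = (q (φ k)).1 * (q (φ k)).2 i ^ (d-1) - εk (φ k) * TE n d (q (φ k)).2 i := by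
    intro k
    have h := hq5 (φ k) i
    rw [TF_add_eps hd] at h
    linarith
  have hlhs' : Tendsto (fun k => TF n d b (q (φ k)).2 i) atTop
      (𝓝 (lam0 * u0 i ^ (d-1) - 0)) := by
    refine hrhs.congr fun k => (heqseq k).symm
  have := tendsto_nhds_unique hlhs hlhs'
  rw [sub_zero] at this
  exact this

end existence

section necessity
variable {n d : ℕ}

theorem reach_is_univ (hn : 1 ≤ n) (hd : 2 ≤ d)
    (a : Fin n → (Fin (d-1) → Fin n) → ℝ)
    (ha : ∀ i m, 0 ≤ a i m) (hrow : ∀ i, ∃ m, 0 < a i m)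
    {C : Set (Fin n)} (hC : TFinalClass n d a C)
    (H : ∀ b : Fin n → (Fin (d - 1) → Fin n) → ℝ, (∀ i m, 0 ≤ b i m) →
        (∀ i m, (0 < b i m ↔ 0 < a i m)) →
        ∃ lam : ℝ, 0 < lam ∧ ∃ u : Fin n → ℝ, (∀ i, 0 < u i) ∧
          ∀ i, TF n d b u i = lam * (u i) ^ (d - 1)) :
    TReach n d a C = Set.univ := by
  classical
  haveI hnn : Nonempty (Fin n) := ⟨⟨0, hn⟩⟩
  haveI hdd : Nonempty (Fin (d-1)) := ⟨⟨0, by omega⟩⟩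
  by_contra hne
  set R : Set (Fin n) := TReach n d a C with hR
  have hRcl : TClosed n d a R := TClosed_TReach a C
  have hCR : C ⊆ R := TReach_self a
  obtain ⟨i0, hi0⟩ := (Set.ne_univ_iff_exists_notMem R).1 hne
  have hS : ∀ i, i ∉ R → ∃ m, 0 < a i m ∧ ∀ k, m k ∉ R := by
    intro i hiR
    by_contra h
    push_neg at h
    exact hiR (hRcl R i subset_rfl hiR (fun m hm => h m hm))
  -- constants
  set A0 : ℝ := univ.sup' (univ_nonempty' hn) (fun i => ∑ m, a i m) with hA0
  have hrowa : ∀ i, 0 < ∑ m, a i m := by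
    intro i
    obtain ⟨m0, hm0⟩ := hrow i
    exact Finset.sum_pos' (fun m _ => ha i m) ⟨m0, Finset.mem_univ m0, hm0⟩
  have hA0_ge : ∀ i, (∑ m, a i m) ≤ A0 :=
    fun i => Finset.le_sup' (fun i => ∑ m, a i m) (Finset.mem_univ i)
  have hA0_pos : 0 < A0 := lt_of_lt_of_le (hrowa (Classical.arbitrary _)) (hA0_ge _)
  set Pf : Finset (Fin n × (Fin (d-1) → Fin n)) :=
    univ.filter (fun q => 0 < a q.1 q.2) with hPf
  have hPfne : Pf.Nonempty := by
    obtain ⟨m0, hm0⟩ := hrow (Classical.arbitrary _)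
    refine ⟨(Classical.arbitrary _, m0), ?_⟩
    rw [hPf, Finset.mem_filter]
    exact ⟨Finset.mem_univ _, hm0⟩
  set cmin : ℝ := Pf.inf' hPfne (fun q => a q.1 q.2) with hcmin
  have hcmin_pos : 0 < cmin := by
    rw [hcmin, Finset.lt_inf'_iff]
    rintro ⟨i, m⟩ hq
    rw [hPf, Finset.mem_filter] at hq
    exact hq.2
  have hcmin_le : ∀ i m, 0 < a i m → cmin ≤ a i m := by
    intro i m him
    have hmem : (i, m) ∈ Pf := by
      rw [hPf, Finset.mem_filter]; exact ⟨Finset.mem_univ _, him⟩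
    exact Finset.inf'_le (fun q => a q.1 q.2) hmem
  set Mc : ℝ := (A0 + 1) / cmin with hMc
  have hMc_pos : 0 < Mc := div_pos (by linarith) hcmin_pos
  -- the bad tensor
  set b : Fin n → (Fin (d-1) → Fin n) → ℝ :=
    fun i m => if i ∈ R then a i m else Mc * a i m with hbdef
  have hb : ∀ i m, 0 ≤ b i m := by
    intro i m
    rw [hbdef]
    by_cases h : i ∈ R <;> simp [h]
    · exact ha i m
    · exact mul_nonneg hMc_pos.le (ha i m)
  have hpat : ∀ i m, 0 < b i m ↔ 0 < a i m := by
    intro i m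
    rw [hbdef]
    by_cases h : i ∈ R <;> simp [h]
    constructor
    · intro hp
      rcases (mul_pos_iff.1 hp) with ⟨_, h2⟩ | ⟨h1, _⟩
      · exact h2
      · linarith
    · intro hp; exact mul_pos hMc_pos hp
  obtain ⟨μ, hμ, v, hv0, heig⟩ := H b hb hpat
  -- upper bound on μ via the final class
  have hCfne : ((Set.toFinite C).toFinset).Nonempty := by
    obtain ⟨c, hc⟩ := hC.1
    exact ⟨c, (Set.Finite.mem_toFinset _).2 hc⟩
  obtain ⟨i1, hi1mem, hi1⟩ := Finset.exists_mem_eq_sup' hCfne v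
  have hi1C : i1 ∈ C := (Set.Finite.mem_toFinset _).1 hi1mem
  have hμA0 : μ ≤ A0 := by
    have h1 : TF n d b v i1 = TF n d a v i1 := by
      unfold TF
      refine Finset.sum_congr rfl fun m _ => ?_
      simp only [hbdef, if_pos (hCR hi1C)]
    have h2 : TF n d a v i1 ≤ (∑ m, a i1 m) * v i1 ^ (d-1) := by
      unfold TF
      rw [Finset.sum_mul]
      refine Finset.sum_le_sum fun m _ => ?_
      rcases lt_or_eq_of_le (ha i1 m) with hpos | hzero
      · refine mul_le_mul_of_nonneg_left ?_ (ha i1 m)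
        have hmemC : ∀ k, m k ∈ C := fun k => hC.2.1 i1 hi1C (m k) ⟨m, hpos, k, rfl⟩
        calc ∏ k, v (m k) ≤ ∏ _k : Fin (d-1), v i1 := by
              refine Finset.prod_le_prod (fun k _ => (hv0 (m k)).le) (fun k _ => ?_)
              rw [← hi1]
              exact Finset.le_sup' v ((Set.Finite.mem_toFinset _).2 (hmemC k))
          _ = v i1 ^ (d-1) := by
              rw [Finset.prod_const, Finset.card_univ, Fintype.card_fin]
      · rw [← hzero]; simp
    have h3 := heig i1
    have h4 : (∑ m, a i1 m) * v i1 ^ (d-1) ≤ A0 * v i1 ^ (d-1) :=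
      mul_le_mul_of_nonneg_right (hA0_ge i1) (pow_nonneg (hv0 i1).le _)
    have h5 : μ * v i1 ^ (d-1) ≤ A0 * v i1 ^ (d-1) := by
      rw [← h3, h1]; linarith
    exact le_of_mul_le_mul_right h5 (pow_pos (hv0 i1) _)
  -- lower bound on μ via the unreachable part
  set Sfin : Finset (Fin n) := univ.filter (fun i => i ∉ R) with hSfin
  have hSfne : Sfin.Nonempty := ⟨i0, by rw [hSfin, Finset.mem_filter]; exact ⟨Finset.mem_univ _, hi0⟩⟩
  obtain ⟨j0, hj0mem, hj0⟩ := Finset.exists_mem_eq_inf' hSfne v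
  have hj0R : j0 ∉ R := by
    rw [hSfin, Finset.mem_filter] at hj0mem
    exact hj0mem.2
  obtain ⟨m', hm'pos, hm'S⟩ := hS j0 hj0R
  have hμlow : A0 + 1 ≤ μ := by
    have h1 : TF n d b v j0 = Mc * TF n d a v j0 := by
      unfold TF
      rw [Finset.mul_sum]
      refine Finset.sum_congr rfl fun m _ => ?_
      simp only [hbdef, if_neg hj0R]
      ring
    have h2 : cmin * v j0 ^ (d-1) ≤ TF n d a v j0 := by
      have hterm : a j0 m' * ∏ k, v (m' k) ≤ TF n d a v j0 :=
        term_le_TF ha (fun i => (hv0 i).le) j0 m'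
      have hprod : v j0 ^ (d-1) ≤ ∏ k, v (m' k) := by
        refine prod_ge_const' (hv0 j0).le (fun k => ?_) hd
        rw [← hj0]
        refine Finset.inf'_le v ?_
        rw [hSfin, Finset.mem_filter]
        exact ⟨Finset.mem_univ _, hm'S k⟩
      have hmul : cmin * v j0 ^ (d-1) ≤ a j0 m' * ∏ k, v (m' k) :=
        mul_le_mul (hcmin_le j0 m' hm'pos) hprod (pow_nonneg (hv0 j0).le _) (ha j0 m')
      linarith
    have h3 := heig j0
    rw [h1] at h3
    have h4 : Mc * (cmin * v j0 ^ (d-1)) ≤ Mc * TF n d a v j0 :=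
      mul_le_mul_of_nonneg_left h2 hMc_pos.le
    have h5 : Mc * cmin = A0 + 1 := by
      rw [hMc]
      field_simp
    have h6 : (A0 + 1) * v j0 ^ (d-1) ≤ μ * v j0 ^ (d-1) := by
      calc (A0 + 1) * v j0 ^ (d-1) = Mc * (cmin * v j0 ^ (d-1)) := by
            rw [← h5]; ring
        _ ≤ Mc * TF n d a v j0 := h4
        _ = μ * v j0 ^ (d-1) := h3
    exact le_of_mul_le_mul_right h6 (pow_pos (hv0 j0) _)
  linarith
end necessity

section finalassembly
variable {n d : ℕ}

theorem final_unique (hn : 1 ≤ n) (hd : 2 ≤ d)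
    (a : Fin n → (Fin (d-1) → Fin n) → ℝ) (hrow : ∀ i, ∃ m, 0 < a i m)
    {C C' : Set (Fin n)} (hC : TFinalClass n d a C)
    (hfull : TReach n d a C = Set.univ) (hC' : TFinalClass n d a C') : C' = C := by
  by_cases hint : ∃ z, z ∈ C' ∧ z ∈ C
  · obtain ⟨z, hz', hz⟩ := hint
    exact (finalClass_eq_of_inter a hC hC' hz hz').symm
  · exfalso
    push_neg at hint
    have hlay : ∀ t : ℕ, ∀ z ∈ C', z ∉ (Phi a)^[t] C := by
      intro t
      induction t with
      | zero => exact fun z hz => hint z hz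
      | succ t ih =>
        intro z hz hmem
        rcases layer_step a t C hmem with hcase | hcase
        · exact ih z hz hcase
        · obtain ⟨m0, hm0⟩ := hrow z
          obtain ⟨k, hk⟩ := hcase m0 hm0
          have hkC' : m0 k ∈ C' := hC'.2.1 z hz (m0 k) ⟨m0, hm0, k, rfl⟩
          exact ih (m0 k) hkC' hk
    obtain ⟨z, hz⟩ := hC'.1
    have := hlay n z hz
    rw [layers a C hC.1 hfull] at this
    exact this trivial

theorem stmt18' (n d : ℕ) (hn : 1 ≤ n) (hd : 2 ≤ d)
    (a : Fin n → (Fin (d - 1) → Fin n) → ℝ)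
    (ha : ∀ i m, 0 ≤ a i m)
    (hrow : ∀ i, ∃ m, 0 < a i m) :
    (∀ b : Fin n → (Fin (d - 1) → Fin n) → ℝ, (∀ i m, 0 ≤ b i m) →
        (∀ i m, (0 < b i m ↔ 0 < a i m)) →
        ∃ lam : ℝ, 0 < lam ∧ ∃ u : Fin n → ℝ, (∀ i, 0 < u i) ∧
          ∀ i, (∑ m : Fin (d - 1) → Fin n, b i m * ∏ k, u (m k)) =
            lam * (u i) ^ (d - 1)) ↔
    (∃ C : Set (Fin n), TFinalClass n d a C ∧
        (∀ C' : Set (Fin n), TFinalClass n d a C' → C' = C) ∧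
        TReach n d a C = Set.univ) := by
  constructor
  · intro H
    have H' : ∀ b : Fin n → (Fin (d - 1) → Fin n) → ℝ, (∀ i m, 0 ≤ b i m) →
        (∀ i m, (0 < b i m ↔ 0 < a i m)) →
        ∃ lam : ℝ, 0 < lam ∧ ∃ u : Fin n → ℝ, (∀ i, 0 < u i) ∧
          ∀ i, TF n d b u i = lam * (u i) ^ (d - 1) := by
      intro b hb hpat
      obtain ⟨lam, hlam, u, hu, heq⟩ := H b hb hpat
      exact ⟨lam, hlam, u, hu, fun i => heq i⟩
    obtain ⟨C, hC, _⟩ := exists_finalClass_reachable a hn (⟨0, hn⟩ : Fin n)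
    have hfull : TReach n d a C = Set.univ := reach_is_univ hn hd a ha hrow hC H'
    exact ⟨C, hC, fun C' hC' => final_unique hn hd a hrow hC hfull hC', hfull⟩
  · rintro ⟨C, hC, _, hfull⟩ b hb hpat
    obtain ⟨lam, hlam, u, hu, heig⟩ := existsPosEig n d hn hd a b ha hb hpat hrow hC hfull
    exact ⟨lam, hlam, u, hu, fun i => heig i⟩

end finalassembly

theorem stmt18 (n d : ℕ) (hn : 1 ≤ n) (hd : 2 ≤ d)
    (a : Fin n → (Fin (d - 1) → Fin n) → ℝ)
    (ha : ∀ i m, 0 ≤ a i m)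
    (hrow : ∀ i, ∃ m, 0 < a i m) :
    (∀ b : Fin n → (Fin (d - 1) → Fin n) → ℝ, (∀ i m, 0 ≤ b i m) →
        (∀ i m, (0 < b i m ↔ 0 < a i m)) →
        ∃ lam : ℝ, 0 < lam ∧ ∃ u : Fin n → ℝ, (∀ i, 0 < u i) ∧
          ∀ i, (∑ m : Fin (d - 1) → Fin n, b i m * ∏ k, u (m k)) =
            lam * (u i) ^ (d - 1)) ↔
    (∃ C : Set (Fin n), TFinalClass n d a C ∧
        (∀ C' : Set (Fin n), TFinalClass n d a C' → C' = C) ∧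
        TReach n d a C = Set.univ) := by
  exact stmt18' n d hn hd a ha hrow
end
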